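/- arXiv:1304.3121 — 2 statements merged into one kernel-verified Lean document; each statement's English description precedes it below -/
import Mathlib

section
/- Invariance of width with respect to associativity: if (t, V) is a wiring decomposition of a net with boundaries N : l → r that has width k, and t′ is a wiring expression equivalent to t up to associativity of ';' and '⊗', then (t′, V) is also a wiring decomposition of width k, and ⟦t′⟧_V has left boundary l and right boundary r. -/
/-! Core definitions: nets with boundaries (Sobocinski et al.),
composition, tensor, isomorphism, step firing semantics, ports,
connections, networks, bases, wiring expressions and decompositions. -/

namespace NWB

/-- A net with boundaries `N : k → l` (without the contention axioms,
which are packaged separately in `IsContention`). -/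
structure NetB (k l : ℕ) : Type 1 where
  P : Type
  T : Type
  finP : Finite P
  finT : Finite T
  pre : T → Set P
  post : T → Set P
  src : T → Set (Fin k)
  tgt : T → Set (Fin l)
  con : T → T → Prop

/-- The contention relation axioms: reflexive, symmetric, and forced whenever
two transitions share a pre-place, post-place, or boundary port. -/
def IsContention {k l : ℕ} (N : NetB k l) : Prop :=
  (∀ t, N.con t t) ∧ (∀ t u, N.con t u → N.con u t) ∧
  (∀ t u,
    ((N.pre t ∩ N.pre u).Nonempty ∨ (N.post t ∩ N.post u).Nonempty ∨
     (N.src t ∩ N.src u).Nonempty ∨ (N.tgt t ∩ N.tgt u).Nonempty) → N.con t u)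

def setPre {k l : ℕ} (N : NetB k l) (U : Set N.T) : Set N.P := ⋃ u ∈ U, N.pre u
def setPost {k l : ℕ} (N : NetB k l) (U : Set N.T) : Set N.P := ⋃ u ∈ U, N.post u
def setSrc {k l : ℕ} (N : NetB k l) (U : Set N.T) : Set (Fin k) := ⋃ u ∈ U, N.src u
def setTgt {k l : ℕ} (N : NetB k l) (U : Set N.T) : Set (Fin l) := ⋃ u ∈ U, N.tgt u

/-- Mutually independent set of transitions: no two distinct members in contention. -/
def MI {k l : ℕ} (N : NetB k l) (U : Set N.T) : Prop :=
  ∀ u ∈ U, ∀ v ∈ U, N.con u v → u = v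

/-- Contention lifted to sets of transitions. -/
def setCon {k l : ℕ} (N : NetB k l) (U V : Set N.T) : Prop :=
  ∃ u ∈ U, ∃ v ∈ V, N.con u v

/-- A synchronisation between `M : l → m` and `N : m → n`. -/
structure Sync {l m n : ℕ} (M : NetB l m) (N : NetB m n) where
  U : Set M.T
  V : Set N.T
  miU : MI M U
  miV : MI N V
  bd : setTgt M U = setSrc N V

def Sync.Trivial {l m n : ℕ} {M : NetB l m} {N : NetB m n} (s : Sync M N) : Prop :=
  s.U = ∅ ∧ s.V = ∅

/-- A minimal synchronisation: non-trivial, and every componentwise-smaller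
synchronisation is trivial or equal to it. -/
def Sync.Minimal {l m n : ℕ} {M : NetB l m} {N : NetB m n} (s : Sync M N) : Prop :=
  ¬ s.Trivial ∧
  ∀ s' : Sync M N, s'.U ⊆ s.U → s'.V ⊆ s.V → (s'.Trivial ∨ (s'.U = s.U ∧ s'.V = s.V))

theorem sync_finite {l m n : ℕ} (M : NetB l m) (N : NetB m n) : Finite (Sync M N) := by
  haveI := M.finT; haveI := N.finT
  apply Finite.of_injective (fun s : Sync M N => (s.U, s.V))
  intro s s' h
  simp only [Prod.mk.injEq] at h
  obtain ⟨h1, h2⟩ := h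
  cases s; cases s'
  simp_all

/-- Composition along a common boundary. -/
def comp {l m n : ℕ} (M : NetB l m) (N : NetB m n) : NetB l n where
  P := M.P ⊕ N.P
  T := {s : Sync M N // s.Minimal}
  finP := by haveI := M.finP; haveI := N.finP; exact inferInstance
  finT := by haveI := sync_finite M N; exact inferInstance
  pre s := (Sum.inl '' setPre M s.1.U) ∪ (Sum.inr '' setPre N s.1.V)
  post s := (Sum.inl '' setPost M s.1.U) ∪ (Sum.inr '' setPost N s.1.V)
  src s := setSrc M s.1.U
  tgt s := setTgt N s.1.V
  con s s' := setCon M s.1.U s'.1.U ∨ setCon N s.1.V s'.1.V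

/-- Tensor product of nets with boundaries. -/
def tensor {l m k n : ℕ} (M : NetB l m) (N : NetB k n) : NetB (l + k) (m + n) where
  P := M.P ⊕ N.P
  T := M.T ⊕ N.T
  finP := by haveI := M.finP; haveI := N.finP; exact inferInstance
  finT := by haveI := M.finT; haveI := N.finT; exact inferInstance
  pre t := match t with
    | Sum.inl t => Sum.inl '' M.pre t
    | Sum.inr t => Sum.inr '' N.pre t
  post t := match t with
    | Sum.inl t => Sum.inl '' M.post t
    | Sum.inr t => Sum.inr '' N.post t
  src t := match t with
    | Sum.inl t => Fin.castAdd k '' M.src t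
    | Sum.inr t => Fin.natAdd l '' N.src t
  tgt t := match t with
    | Sum.inl t => Fin.castAdd n '' M.tgt t
    | Sum.inr t => Fin.natAdd m '' N.tgt t
  con t u := match t, u with
    | Sum.inl t, Sum.inl u => M.con t u
    | Sum.inr t, Sum.inr u => N.con t u
    | _, _ => False

/-- Isomorphism of nets with boundaries: bijections on places and transitions
preserving pre-sets, post-sets, boundary maps and contention. -/
structure NetIso {k l : ℕ} (M N : NetB k l) where
  ep : M.P ≃ N.P
  et : M.T ≃ N.T
  pre_eq : ∀ t, N.pre (et t) = ep '' M.pre t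
  post_eq : ∀ t, N.post (et t) = ep '' M.post t
  src_eq : ∀ t, N.src (et t) = M.src t
  tgt_eq : ∀ t, N.tgt (et t) = M.tgt t
  con_iff : ∀ t u, N.con (et t) (et u) ↔ M.con t u

def Iso {k l : ℕ} (M N : NetB k l) : Prop := Nonempty (NetIso M N)

/-- Transport a net along equalities of its boundary sizes. -/
def castNet {k l k' l' : ℕ} (h1 : k = k') (h2 : l = l') (N : NetB k l) : NetB k' l' where
  P := N.P
  T := N.T
  finP := N.finP
  finT := N.finT
  pre := N.pre
  post := N.post
  src t := Fin.cast h1 '' N.src t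
  tgt t := Fin.cast h2 '' N.tgt t
  con := N.con

def emptyNet : NetB 0 0 where
  P := Empty
  T := Empty
  finP := inferInstance
  finT := inferInstance
  pre t := t.elim
  post t := t.elim
  src t := t.elim
  tgt t := t.elim
  con t _ := t.elim

/-- The step firing semantics: `Fires N X X' α β` iff the LTS `⟦N⟧` has a
transition `X →⟨α,β⟩ X'`. -/
def Fires {k l : ℕ} (N : NetB k l) (X X' : Set N.P) (α : Set (Fin k)) (β : Set (Fin l)) :
    Prop :=
  ∃ U : Set N.T, MI N U ∧ setPre N U ⊆ X ∧ setPost N U ∩ X = ∅ ∧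
    X' = (X \ setPre N U) ∪ setPost N U ∧ setSrc N U = α ∧ setTgt N U = β

/-! ### Ports, connections and networks -/

/-- The ports of a net: an in-port and an out-port for each place,
together with the left and right boundary ports. -/
def Port {k l : ℕ} (N : NetB k l) : Type := (N.P ⊕ N.P) ⊕ (Fin k ⊕ Fin l)

def portIn {k l : ℕ} {N : NetB k l} (p : N.P) : Port N := Sum.inl (Sum.inl p)
def portOut {k l : ℕ} {N : NetB k l} (p : N.P) : Port N := Sum.inl (Sum.inr p)
def bLeft {k l : ℕ} {N : NetB k l} (i : Fin k) : Port N := Sum.inr (Sum.inl i)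
def bRight {k l : ℕ} {N : NetB k l} (j : Fin l) : Port N := Sum.inr (Sum.inr j)

/-- The portset of a transition. -/
def tports {k l : ℕ} (N : NetB k l) (t : N.T) : Set (Port N) :=
  (portOut '' N.pre t) ∪ (portIn '' N.post t) ∪ (bLeft '' N.src t) ∪ (bRight '' N.tgt t)

/-- The connection of a port `q`: the portsets (minus `q`) of all transitions
properly connecting to `q`. -/
def conn {k l : ℕ} (N : NetB k l) (q : Port N) : Set (Set (Port N)) :=
  { K | ∃ t : N.T, {q} ⊂ tports N t ∧ K = tports N t \ {q} }

/-- The connection of `q` restricted to a set `R` of ports. -/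
def connR {k l : ℕ} (N : NetB k l) (R : Set (Port N)) (q : Port N) :
    Set (Set (Port N)) :=
  { K' | ∃ K ∈ conn N q, (K ∩ R).Nonempty ∧ K' = K ∩ R }

/-- Extended ports of the left part of an oriented partition. -/
def eportsL {k l : ℕ} (N : NetB k l) (Pl : Set N.P) : Set (Port N) :=
  (portIn '' Pl) ∪ (portOut '' Pl) ∪ Set.range (bLeft (N := N))

/-- Extended ports of the right part of an oriented partition. -/
def eportsR {k l : ℕ} (N : NetB k l) (Pr : Set N.P) : Set (Port N) :=
  (portIn '' Pr) ∪ (portOut '' Pr) ∪ Set.range (bRight (N := N))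

/-- The network `net(P_l → P_r)`. -/
def networkLR {k l : ℕ} (N : NetB k l) (Pl Pr : Set N.P) :
    Set (Set (Set (Port N))) :=
  { c | ∃ q ∈ eportsL N Pl, c = connR N (eportsR N Pr) q }

/-- The network `net(P_r → P_l)`. -/
def networkRL {k l : ℕ} (N : NetB k l) (Pl Pr : Set N.P) :
    Set (Set (Set (Port N))) :=
  { c | ∃ q ∈ eportsR N Pr, c = connR N (eportsL N Pl) q }

/-- `b` is a basis of the network `M`: every connection in `M` is a union of
basis connections. -/
def IsBasis {C : Type} {m : ℕ} (b : Fin m → Set C) (M : Set (Set C)) : Prop :=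
  ∀ c ∈ M, ∃ S : Finset (Fin m), c = ⋃ i ∈ S, b i

/-- The dimension of a network: the size of its smallest basis. -/
noncomputable def netDim {C : Type} (M : Set (Set C)) : ℕ :=
  sInf { m | ∃ b : Fin m → Set C, IsBasis b M }

/-- Purity of a composition `N_l ; N_r`: no transition of either component
connects to two different shared boundary ports. -/
def Pure {k n l : ℕ} (Nl : NetB k n) (Nr : NetB n l) : Prop :=
  (∀ j : Fin n, ∀ K ∈ conn Nl (bRight j), ∀ i : Fin n, bRight i ∉ K) ∧
  (∀ j : Fin n, ∀ K ∈ conn Nr (bLeft j), ∀ i : Fin n, bLeft i ∉ K)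

/-! ### Wiring expressions and decompositions -/

/-- Nets with boundaries of arbitrary boundary sizes. -/
def NetS : Type 1 := Σ (k : ℕ) (l : ℕ), NetB k l

/-- Composition on `NetS` (junk value on boundary mismatch). -/
def seqS (X Y : NetS) : NetS :=
  if h : X.2.1 = Y.1 then ⟨X.1, Y.2.1, comp (castNet rfl h X.2.2) Y.2.2⟩
  else ⟨0, 0, emptyNet⟩

def tenS (X Y : NetS) : NetS := ⟨X.1 + Y.1, X.2.1 + Y.2.1, tensor X.2.2 Y.2.2⟩

/-- Wiring expressions: binary trees with `;` and `⊗` nodes and variables at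
the leaves. -/
inductive WExpr (V : Type) : Type
  | leaf : V → WExpr V
  | seq : WExpr V → WExpr V → WExpr V
  | ten : WExpr V → WExpr V → WExpr V

/-- Semantics of a wiring expression under a variable assignment. -/
def sem {V : Type} (A : V → NetS) : WExpr V → NetS
  | .leaf x => A x
  | .seq t₁ t₂ => seqS (sem A t₁) (sem A t₂)
  | .ten t₁ t₂ => tenS (sem A t₁) (sem A t₂)

/-- Compatibility of an assignment with an expression: at each `;` node the
shared boundaries match. -/
def WT {V : Type} (A : V → NetS) : WExpr V → Prop
  | .leaf _ => True
  | .seq t₁ t₂ => WT A t₁ ∧ WT A t₂ ∧ (sem A t₁).2.1 = (sem A t₂).1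
  | .ten t₁ t₂ => WT A t₁ ∧ WT A t₂

/-- The wiring decomposition `(t, A)` has width `w`: every leaf net has
boundaries and number of places `≤ w`, and every subexpression has
boundaries `≤ w`. -/
def HasWidth {V : Type} (A : V → NetS) (w : ℕ) : WExpr V → Prop
  | .leaf x => (A x).1 ≤ w ∧ Nat.card (A x).2.2.P ≤ w ∧ (A x).2.1 ≤ w
  | .seq t₁ t₂ => HasWidth A w t₁ ∧ HasWidth A w t₂ ∧
      (sem A (.seq t₁ t₂)).1 ≤ w ∧ (sem A (.seq t₁ t₂)).2.1 ≤ w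
  | .ten t₁ t₂ => HasWidth A w t₁ ∧ HasWidth A w t₂ ∧
      (sem A (.ten t₁ t₂)).1 ≤ w ∧ (sem A (.ten t₁ t₂)).2.1 ≤ w

/-- `(t, A)` is a wiring decomposition of `N : k → l`: the assignment maps
variables to genuine nets with boundaries, is compatible with `t`, and
`⟦t⟧_A ≅ N`. -/
def IsDecompOf {V : Type} {k l : ℕ} (A : V → NetS) (t : WExpr V) (N : NetB k l) : Prop :=
  (∀ x, IsContention (A x).2.2) ∧ WT A t ∧
  ∃ (h1 : (sem A t).1 = k) (h2 : (sem A t).2.1 = l),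
    Iso (castNet h1 h2 (sem A t).2.2) N

/-- A net has decomposition width `w` if it has a wiring decomposition of
width `w`. -/
def HasDecompWidth {k l : ℕ} (N : NetB k l) (w : ℕ) : Prop :=
  ∃ (Var : Type) (A : Var → NetS) (t : WExpr Var),
    IsDecompOf A t N ∧ HasWidth A w t

/-- A pure wiring decomposition: at every `;` node the composition of the two
subexpression nets is pure. -/
def PureExpr {V : Type} (A : V → NetS) : WExpr V → Prop
  | .leaf _ => True
  | .seq t₁ t₂ => PureExpr A t₁ ∧ PureExpr A t₂ ∧
      ∀ (h : (sem A t₁).2.1 = (sem A t₂).1),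
        Pure (castNet rfl h (sem A t₁).2.2) (sem A t₂).2.2
  | .ten t₁ t₂ => PureExpr A t₁ ∧ PureExpr A t₂

/-- One step of reassociation of `;` or `⊗`, anywhere inside an expression. -/
inductive AssocStep {V : Type} : WExpr V → WExpr V → Prop
  | seqAssoc (a b c : WExpr V) : AssocStep (.seq (.seq a b) c) (.seq a (.seq b c))
  | tenAssoc (a b c : WExpr V) : AssocStep (.ten (.ten a b) c) (.ten a (.ten b c))
  | seqCongrL {a a' : WExpr V} (b : WExpr V) :
      AssocStep a a' → AssocStep (.seq a b) (.seq a' b)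
  | seqCongrR (a : WExpr V) {b b' : WExpr V} :
      AssocStep b b' → AssocStep (.seq a b) (.seq a b')
  | tenCongrL {a a' : WExpr V} (b : WExpr V) :
      AssocStep a a' → AssocStep (.ten a b) (.ten a' b)
  | tenCongrR (a : WExpr V) {b b' : WExpr V} :
      AssocStep b b' → AssocStep (.ten a b) (.ten a b')

/-- Equivalence of wiring expressions up to associativity of `;` and `⊗`. -/
def AssocEquiv {V : Type} : WExpr V → WExpr V → Prop := Relation.EqvGen AssocStep

/-! ### Concrete families of nets -/

/-- The clique net `C_n : 0 → 0`, with the minimal contention relation. -/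
def clique (n : ℕ) : NetB 0 0 where
  P := Fin n
  T := {p : Fin n × Fin n // p.1 ≠ p.2}
  finP := inferInstance
  finT := inferInstance
  pre t := {t.1.1}
  post t := {t.1.2}
  src _ := ∅
  tgt _ := ∅
  con t u := t.1.1 = u.1.1 ∨ t.1.2 = u.1.2

/-- The subset net `P_n : 0 → 0`: a place `S` (= `none`), places `[n]`, and for
each `A ⊆ [n]` a transition `S → A`; the minimal contention relation is total
since all pre-sets are `{S}`. -/
def subsetNet (n : ℕ) : NetB 0 0 where
  P := Option (Fin n)
  T := Set (Fin n)
  finP := inferInstance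
  finT := inferInstance
  pre _ := {none}
  post A := some '' A
  src _ := ∅
  tgt _ := ∅
  con _ _ := True

/-- The tree net `T_Δ^{n,k} : 0 → 0`: places are nodes of the complete n-ary
tree of depth k (lists over `Fin n` of length ≤ k); each non-leaf node has a
single transition to the set of its n children. The minimal contention
relation is equality. -/
def treeD (n k : ℕ) : NetB 0 0 where
  P := {l : List (Fin n) // l.length ≤ k}
  T := {l : List (Fin n) // l.length < k}
  finP := (List.finite_length_le (Fin n) k).to_subtype
  finT := (List.finite_length_lt (Fin n) k).to_subtype
  pre t := {⟨t.1, t.2.le⟩}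
  post t := {p | ∃ i : Fin n, p.1 = t.1 ++ [i]}
  src _ := ∅
  tgt _ := ∅
  con t u := t = u

/-- The tree net `T_Λ^{n,k} : 0 → 0`: as `T_Δ^{n,k}` but with a separate
transition from each non-leaf node to each of its children. The minimal
contention relation relates transitions with the same parent node. -/
def treeL (n k : ℕ) : NetB 0 0 where
  P := {l : List (Fin n) // l.length ≤ k}
  T := {l : List (Fin n) // l.length < k} × Fin n
  finP := (List.finite_length_le (Fin n) k).to_subtype
  finT := by
    haveI : Finite {l : List (Fin n) // l.length < k} :=
      (List.finite_length_lt (Fin n) k).to_subtype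
    exact inferInstance
  pre t := {⟨t.1.1, t.1.2.le⟩}
  post t := {p | p.1 = t.1.1 ++ [t.2]}
  src _ := ∅
  tgt _ := ∅
  con t u := t.1 = u.1

/-- The grid net `G_n : 0 → 0`: places `[n] × [n]`, a transition from each
place to its right neighbour and to its lower neighbour; the minimal
contention relation relates transitions sharing a pre-place or post-place. -/
def grid (n : ℕ) : NetB 0 0 where
  P := Fin n × Fin n
  T := {e : (Fin n × Fin n) × (Fin n × Fin n) //
        (e.2.1 = e.1.1 ∧ (e.2.2 : ℕ) = (e.1.2 : ℕ) + 1) ∨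
        ((e.2.1 : ℕ) = (e.1.1 : ℕ) + 1 ∧ e.2.2 = e.1.2)}
  finP := inferInstance
  finT := inferInstance
  pre e := {e.1.1}
  post e := {e.1.2}
  src _ := ∅
  tgt _ := ∅
  con t u := t.1.1 = u.1.1 ∨ t.1.2 = u.1.2

end NWB

namespace NWB

/-!
Reassociation changes neither well-formedness nor the boundary sizes of reassociated
subexpressions, so widths are preserved once the semantics are known to be isomorphic. For `⊗`
this is associativity of disjoint sums. For `;` the point is that, by the contention axioms, a
synchronisation of `M` and `N` is the union of the minimal synchronisations below it, and these
are pairwise independent: synchronisations of `M` and `N` correspond, as a partial order, to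
independent sets of transitions of `M ; N`. Hence the synchronisations of `M ; N` with `O` and
those of `M` with `N ; O` are both order isomorphic to pairs of synchronisations that agree on
`N`, and their atoms, which are the transitions of the two composites, correspond.
-/

open Set

namespace IsContention

variable {k l : ℕ} {M : NetB k l} (hM : IsContention M) (u v : M.T)
include hM

lemma con_of_pre (h : (M.pre u ∩ M.pre v).Nonempty) : M.con u v := hM.2.2 u v (.inl h)

lemma con_of_post (h : (M.post u ∩ M.post v).Nonempty) : M.con u v := hM.2.2 u v (.inr (.inl h))

lemma con_of_src (h : (M.src u ∩ M.src v).Nonempty) : M.con u v :=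
  hM.2.2 u v (.inr (.inr (.inl h)))

lemma con_of_tgt (h : (M.tgt u ∩ M.tgt v).Nonempty) : M.con u v :=
  hM.2.2 u v (.inr (.inr (.inr h)))

end IsContention

lemma MI.mono {k l : ℕ} {M : NetB k l} {U U' : Set M.T} (hU : MI M U) (h : U' ⊆ U) : MI M U' :=
  fun u hu v hv => hU u (h hu) v (h hv)

lemma MI.pairwiseDisjoint_src {k l : ℕ} {M : NetB k l} (hM : IsContention M) {U : Set M.T}
    (hU : MI M U) : U.PairwiseDisjoint M.src :=
  pairwiseDisjoint_iff.mpr fun u hu v hv h => hU u hu v hv (hM.con_of_src u v h)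

lemma MI.pairwiseDisjoint_tgt {k l : ℕ} {M : NetB k l} (hM : IsContention M) {U : Set M.T}
    (hU : MI M U) : U.PairwiseDisjoint M.tgt :=
  pairwiseDisjoint_iff.mpr fun u hu v hv h => hU u hu v hv (hM.con_of_tgt u v h)

/-! ### Synchronisations as a partial order -/

namespace Sync

variable {a b c : ℕ} {M : NetB a b} {N : NetB b c}

@[ext]
lemma ext {s s' : Sync M N} (hU : s.U = s'.U) (hV : s.V = s'.V) : s = s' := by
  cases s; cases s'; simp_all

instance : PartialOrder (Sync M N) :=
  PartialOrder.lift (fun s => (s.U, s.V)) fun _ _ h =>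
    ext (congrArg Prod.fst h) (congrArg Prod.snd h)

instance : OrderBot (Sync M N) where
  bot := ⟨∅, ∅, fun _ h => h.elim, fun _ h => h.elim, by simp [setTgt, setSrc]⟩
  bot_le _ := ⟨empty_subset _, empty_subset _⟩

lemma trivial_iff_eq_bot {s : Sync M N} : s.Trivial ↔ s = ⊥ :=
  ⟨fun h => ext h.1 h.2, fun h => h ▸ ⟨rfl, rfl⟩⟩

lemma minimal_iff_isAtom {s : Sync M N} : s.Minimal ↔ IsAtom s := by
  simp only [Minimal, trivial_iff_eq_bot, IsAtom]
  refine and_congr_right fun hs => ⟨fun h b hb => ?_, fun h b hb => ?_⟩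
  · exact (h b hb.le.1 hb.le.2).resolve_right fun hUV => hb.ne (ext hUV.1 hUV.2)
  · intro hV
    rcases (show b ≤ s from ⟨hb, hV⟩).lt_or_eq with hlt | rfl
    · exact .inl (h b hlt)
    · exact .inr ⟨rfl, rfl⟩

instance : Membership (M.T ⊕ N.T) (Sync M N) where
  mem s x := x.elim (· ∈ s.U) (· ∈ s.V)

@[simp] lemma inl_mem {s : Sync M N} {u : M.T} : Sum.inl u ∈ s ↔ u ∈ s.U := Iff.rfl

@[simp] lemma inr_mem {s : Sync M N} {v : N.T} : Sum.inr v ∈ s ↔ v ∈ s.V := Iff.rfl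

lemma le_iff_forall_mem {s s' : Sync M N} : s ≤ s' ↔ ∀ x ∈ s, x ∈ s' :=
  ⟨fun h => by rintro (u | v) hx; exacts [h.1 hx, h.2 hx],
    fun h => ⟨fun u hu => h (.inl u) hu, fun v hv => h (.inr v) hv⟩⟩

lemma eq_bot_iff_forall_notMem {s : Sync M N} : s = ⊥ ↔ ∀ x, x ∉ s := by
  rw [eq_bot_iff, le_iff_forall_mem]
  exact forall_congr' fun x => by cases x <;> exact Iff.rfl

lemma exists_mem_of_ne_bot {s : Sync M N} (hs : s ≠ ⊥) : ∃ x, x ∈ s := by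
  by_contra! h
  exact hs (eq_bot_iff_forall_notMem.mpr h)

/-- By the contention axioms, independent transitions have disjoint boundary ports, so the
boundary of a difference is the difference of the boundaries. -/
lemma exists_sdiff (hM : IsContention M) (hN : IsContention N) {s s₁ s₂ : Sync M N}
    (h₁ : s₁ ≤ s) (h₂ : s₂ ≤ s) : ∃ d : Sync M N, d ≤ s₁ ∧ ∀ x, x ∈ d ↔ x ∈ s₁ ∧ x ∉ s₂ := by
  refine ⟨⟨s₁.U \ s₂.U, s₁.V \ s₂.V, s.miU.mono (sdiff_subset.trans h₁.1),
    s.miV.mono (sdiff_subset.trans h₁.2), ?_⟩, ⟨sdiff_subset, sdiff_subset⟩, by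
    rintro (u | v) <;> rfl⟩
  have hU := (s.miU.pairwiseDisjoint_tgt hM).subset (union_subset h₁.1 h₂.1)
  have hV := (s.miV.pairwiseDisjoint_src hN).subset (union_subset h₁.2 h₂.2)
  simp only [setTgt, setSrc, ← biUnion_sdiff_biUnion_eq hU, ← biUnion_sdiff_biUnion_eq hV]
  rw [← setTgt, ← setTgt, ← setSrc, ← setSrc, s₁.bd, s₂.bd]

variable (hM : IsContention M) (hN : IsContention N)
include hM hN

lemma exists_isAtom_le_mem {s : Sync M N} {x : M.T ⊕ N.T} (hx : x ∈ s) :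
    ∃ m, IsAtom m ∧ m ≤ s ∧ x ∈ m := by
  have := sync_finite M N
  obtain ⟨m, hms, hxm, hmin⟩ := exists_minimal_le_of_wellFoundedLT (x ∈ ·) s hx
  refine ⟨m, ⟨fun h => (eq_bot_iff_forall_notMem.mp h) x hxm, fun b hbm => ?_⟩, hms, hxm⟩
  obtain ⟨d, hdm, hd⟩ := exists_sdiff hM hN le_rfl hbm.le
  by_cases hxb : x ∈ b
  · exact absurd (hmin hxb hbm.le) hbm.not_ge
  have hmd : m ≤ d := hmin ((hd x).mpr ⟨hxm, hxb⟩) hdm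
  refine eq_bot_iff_forall_notMem.mpr fun y hyb => ?_
  exact ((hd y).mp (le_iff_forall_mem.mp hmd y (le_iff_forall_mem.mp hbm.le y hyb))).2 hyb

lemma eq_of_isAtom_of_mem {s m m' : Sync M N} (hm : IsAtom m) (hm' : IsAtom m')
    (hms : m ≤ s) (hm's : m' ≤ s) {x : M.T ⊕ N.T} (hx : x ∈ m) (hx' : x ∈ m') : m = m' := by
  obtain ⟨d, hdm, hd⟩ := exists_sdiff hM hN hms hm's
  rcases hm.le_iff.mp hdm with rfl | rfl
  · refine (hm'.le_iff.mp (le_iff_forall_mem.mpr fun y hy => ?_)).resolve_left hm.1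
    by_contra hy'
    exact (eq_bot_iff_forall_notMem.mp rfl) y ((hd y).mpr ⟨hy, hy'⟩)
  · exact absurd hx' ((hd x).mp hx).2

end Sync

/-! ### Transitions of a composition as atoms -/

section Join

variable {a b c : ℕ} {M : NetB a b} {N : NetB b c}

def joinU (S : Set (comp M N).T) : Set M.T := ⋃ t ∈ S, t.1.U

def joinV (S : Set (comp M N).T) : Set N.T := ⋃ t ∈ S, t.1.V

lemma biUnion_joinU {X : Type*} (S : Set (comp M N).T) (f : M.T → Set X) :
    ⋃ u ∈ joinU S, f u = ⋃ t ∈ S, ⋃ u ∈ t.1.U, f u := by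
  simp only [joinU, biUnion_iUnion]

lemma biUnion_joinV {X : Type*} (S : Set (comp M N).T) (f : N.T → Set X) :
    ⋃ v ∈ joinV S, f v = ⋃ t ∈ S, ⋃ v ∈ t.1.V, f v := by
  simp only [joinV, biUnion_iUnion]

lemma setPre_comp (S : Set (comp M N).T) :
    setPre (comp M N) S = Sum.inl '' setPre M (joinU S) ∪ Sum.inr '' setPre N (joinV S) := by
  change ⋃ t ∈ S, (Sum.inl '' setPre M t.1.U ∪ Sum.inr '' setPre N t.1.V) = _
  simp only [iUnion_union_distrib, ← image_iUnion₂, setPre, biUnion_joinU, biUnion_joinV]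

lemma setPost_comp (S : Set (comp M N).T) :
    setPost (comp M N) S = Sum.inl '' setPost M (joinU S) ∪ Sum.inr '' setPost N (joinV S) := by
  change ⋃ t ∈ S, (Sum.inl '' setPost M t.1.U ∪ Sum.inr '' setPost N t.1.V) = _
  simp only [iUnion_union_distrib, ← image_iUnion₂, setPost, biUnion_joinU, biUnion_joinV]

lemma setSrc_comp (S : Set (comp M N).T) : setSrc (comp M N) S = setSrc M (joinU S) := by
  simp only [setSrc, biUnion_joinU]; rfl

lemma setTgt_comp (S : Set (comp M N).T) : setTgt (comp M N) S = setTgt N (joinV S) := by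
  simp only [setTgt, biUnion_joinV]; rfl

lemma setCon_comp (S S' : Set (comp M N).T) : setCon (comp M N) S S' ↔
    setCon M (joinU S) (joinU S') ∨ setCon N (joinV S) (joinV S') := by
  simp only [setCon, joinU, joinV, mem_iUnion, exists_prop]
  constructor
  · rintro ⟨t, ht, t', ht', ⟨u, hu, u', hu', h⟩ | ⟨v, hv, v', hv', h⟩⟩
    exacts [.inl ⟨u, ⟨t, ht, hu⟩, u', ⟨t', ht', hu'⟩, h⟩,
      .inr ⟨v, ⟨t, ht, hv⟩, v', ⟨t', ht', hv'⟩, h⟩]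
  · rintro (⟨u, ⟨t, ht, hu⟩, u', ⟨t', ht', hu'⟩, h⟩ | ⟨v, ⟨t, ht, hv⟩, v', ⟨t', ht', hv'⟩, h⟩)
    exacts [⟨t, ht, t', ht', .inl ⟨u, hu, u', hu', h⟩⟩, ⟨t, ht, t', ht', .inr ⟨v, hv, v', hv', h⟩⟩]

lemma setTgt_joinU_eq_setSrc_joinV (S : Set (comp M N).T) :
    setTgt M (joinU S) = setSrc N (joinV S) := by
  simp only [setTgt, setSrc, biUnion_joinU, biUnion_joinV]
  exact iUnion₂_congr fun t _ => t.1.bd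

end Join

namespace Sync

variable {a b c : ℕ} {M : NetB a b} {N : NetB b c}

lemma isAtom_val (t : (comp M N).T) : IsAtom t.1 := minimal_iff_isAtom.mp t.2

def join (S : Set (comp M N).T) (hS : MI (comp M N) S) : Sync M N where
  U := joinU S
  V := joinV S
  miU := by
    simp only [joinU, MI, mem_iUnion₂]
    rintro u ⟨t, ht, hu⟩ u' ⟨t', ht', hu'⟩ h
    obtain rfl := hS t ht t' ht' (.inl ⟨u, hu, u', hu', h⟩)
    exact t.1.miU u hu u' hu' h
  miV := by
    simp only [joinV, MI, mem_iUnion₂]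
    rintro v ⟨t, ht, hv⟩ v' ⟨t', ht', hv'⟩ h
    obtain rfl := hS t ht t' ht' (.inr ⟨v, hv, v', hv', h⟩)
    exact t.1.miV v hv v' hv' h
  bd := setTgt_joinU_eq_setSrc_joinV S

variable {S S' : Set (comp M N).T} {hS : MI (comp M N) S} {hS' : MI (comp M N) S'}

lemma mem_join {x : M.T ⊕ N.T} : x ∈ join S hS ↔ ∃ t ∈ S, x ∈ t.1 := by
  rcases x with u | v <;> simp [join, joinU, joinV]

lemma le_join {t : (comp M N).T} (ht : t ∈ S) : t.1 ≤ join S hS :=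
  le_iff_forall_mem.mpr fun _ hx => mem_join.mpr ⟨t, ht, hx⟩

lemma join_mono (h : S ⊆ S') : join S hS ≤ join S' hS' :=
  ⟨biUnion_subset_biUnion_left h, biUnion_subset_biUnion_left h⟩

def atoms (s : Sync M N) : Set (comp M N).T := {t | t.1 ≤ s}

lemma atoms_mono {s s' : Sync M N} (h : s ≤ s') : atoms s ⊆ atoms s' :=
  fun _ ht => le_trans ht h

variable (hM : IsContention M) (hN : IsContention N)
include hM hN

lemma mi_atoms (s : Sync M N) : MI (comp M N) (atoms s) := by
  rintro t ht t' ht' (⟨u, hu, u', hu', h⟩ | ⟨v, hv, v', hv', h⟩)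
  · obtain rfl := s.miU u (ht.1 hu) u' (ht'.1 hu') h
    exact Subtype.ext <| eq_of_isAtom_of_mem hM hN (isAtom_val t) (isAtom_val t') ht ht'
      (x := .inl u) hu hu'
  · obtain rfl := s.miV v (ht.2 hv) v' (ht'.2 hv') h
    exact Subtype.ext <| eq_of_isAtom_of_mem hM hN (isAtom_val t) (isAtom_val t') ht ht'
      (x := .inr v) hv hv'

lemma join_atoms (s : Sync M N) : join (atoms s) (mi_atoms hM hN s) = s := by
  refine le_antisymm (le_iff_forall_mem.mpr fun x hx => ?_) (le_iff_forall_mem.mpr fun x hx => ?_)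
  · obtain ⟨t, ht, hxt⟩ := mem_join.mp hx
    exact le_iff_forall_mem.mp ht x hxt
  · obtain ⟨m, hm, hms, hxm⟩ := exists_isAtom_le_mem hM hN hx
    exact mem_join.mpr ⟨⟨m, minimal_iff_isAtom.mpr hm⟩, hms, hxm⟩

lemma joinU_atoms (s : Sync M N) : joinU s.atoms = s.U := congrArg U (join_atoms hM hN s)

lemma joinV_atoms (s : Sync M N) : joinV s.atoms = s.V := congrArg V (join_atoms hM hN s)

lemma atoms_join (hS : MI (comp M N) S) : atoms (join S hS) = S := by
  refine Subset.antisymm (fun t ht => ?_) (fun t ht => le_join ht)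
  obtain ⟨x, hx⟩ := exists_mem_of_ne_bot (isAtom_val t).1
  obtain ⟨t', ht', hxt'⟩ := mem_join.mp (le_iff_forall_mem.mp ht x hx)
  obtain rfl : t = t' := Subtype.ext <|
    eq_of_isAtom_of_mem hM hN (isAtom_val t) (isAtom_val t') ht (le_join ht') hx hxt'
  exact ht'

end Sync

def compTransEquiv {a b b' c : ℕ} {M : NetB a b} {N : NetB b c} {M' : NetB a b'}
    {N' : NetB b' c} (e : Sync M N ≃o Sync M' N') : (comp M N).T ≃ (comp M' N').T :=
  e.toEquiv.subtypeEquiv fun s => by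
    rw [Sync.minimal_iff_isAtom, Sync.minimal_iff_isAtom]
    exact (e.isAtom_iff s).symm

/-! ### Isomorphisms of nets -/

namespace NetIso

variable {k l : ℕ}

def refl (M : NetB k l) : NetIso M M where
  ep := Equiv.refl _
  et := Equiv.refl _
  pre_eq _ := (image_id _).symm
  post_eq _ := (image_id _).symm
  src_eq _ := rfl
  tgt_eq _ := rfl
  con_iff _ _ := Iff.rfl

def symm {M N : NetB k l} (i : NetIso M N) : NetIso N M where
  ep := i.ep.symm
  et := i.et.symm
  pre_eq t := by rw [← i.et.apply_symm_apply t, i.pre_eq, Equiv.symm_apply_apply,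
    Equiv.symm_image_image]
  post_eq t := by rw [← i.et.apply_symm_apply t, i.post_eq, Equiv.symm_apply_apply,
    Equiv.symm_image_image]
  src_eq t := by rw [← i.src_eq, Equiv.apply_symm_apply]
  tgt_eq t := by rw [← i.tgt_eq, Equiv.apply_symm_apply]
  con_iff t u := by rw [← i.con_iff, Equiv.apply_symm_apply, Equiv.apply_symm_apply]

def trans {M N O : NetB k l} (i : NetIso M N) (j : NetIso N O) : NetIso M O where
  ep := i.ep.trans j.ep
  et := i.et.trans j.et
  pre_eq t := by simp only [Equiv.trans_apply, j.pre_eq, i.pre_eq, Equiv.coe_trans, image_comp]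
  post_eq t := by simp only [Equiv.trans_apply, j.post_eq, i.post_eq, Equiv.coe_trans, image_comp]
  src_eq t := (j.src_eq _).trans (i.src_eq t)
  tgt_eq t := (j.tgt_eq _).trans (i.tgt_eq t)
  con_iff t u := (j.con_iff _ _).trans (i.con_iff t u)

variable {M M' : NetB k l} (i : NetIso M M')

lemma setPre_image (U : Set M.T) : setPre M' (i.et '' U) = i.ep '' setPre M U := by
  simp only [setPre, biUnion_image, i.pre_eq, image_iUnion₂]

lemma setPost_image (U : Set M.T) : setPost M' (i.et '' U) = i.ep '' setPost M U := by
  simp only [setPost, biUnion_image, i.post_eq, image_iUnion₂]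

lemma setSrc_image (U : Set M.T) : setSrc M' (i.et '' U) = setSrc M U := by
  simp only [setSrc, biUnion_image, i.src_eq]

lemma setTgt_image (U : Set M.T) : setTgt M' (i.et '' U) = setTgt M U := by
  simp only [setTgt, biUnion_image, i.tgt_eq]

lemma mi_image {U : Set M.T} (hU : MI M U) : MI M' (i.et '' U) := by
  rintro _ ⟨u, hu, rfl⟩ _ ⟨v, hv, rfl⟩ h
  exact congrArg i.et (hU u hu v hv ((i.con_iff u v).mp h))

lemma setCon_image (U V : Set M.T) : setCon M' (i.et '' U) (i.et '' V) ↔ setCon M U V := by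
  simp only [setCon, exists_mem_image, i.con_iff]

end NetIso

lemma castNet_rfl {k l : ℕ} (M : NetB k l) : castNet rfl rfl M = M := by
  cases M
  simp only [castNet, Fin.cast_refl, id_eq, image_id']

lemma Iso.refl {k l : ℕ} (M : NetB k l) : Iso M M := ⟨NetIso.refl M⟩

lemma Iso.symm {k l : ℕ} {M N : NetB k l} (h : Iso M N) : Iso N M := h.map NetIso.symm

lemma Iso.trans {k l : ℕ} {M N O : NetB k l} (h : Iso M N) (h' : Iso N O) : Iso M O :=
  h.elim fun i => h'.map i.trans

section CompIso

variable {a b c : ℕ} {M M' : NetB a b} {N N' : NetB b c}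

def Sync.image (i : NetIso M M') (j : NetIso N N') (s : Sync M N) : Sync M' N' where
  U := i.et '' s.U
  V := j.et '' s.V
  miU := i.mi_image s.miU
  miV := j.mi_image s.miV
  bd := by rw [i.setTgt_image, j.setSrc_image, s.bd]

def Sync.mapIso (i : NetIso M M') (j : NetIso N N') : Sync M N ≃o Sync M' N' :=
  Equiv.toOrderIso
    { toFun := Sync.image i j
      invFun := Sync.image i.symm j.symm
      left_inv := fun s => Sync.ext (i.et.symm_image_image s.U) (j.et.symm_image_image s.V)
      right_inv := fun s => Sync.ext (i.et.image_symm_image s.U) (j.et.image_symm_image s.V) }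
    (fun _ _ h => ⟨image_mono h.1, image_mono h.2⟩)
    (fun _ _ h => ⟨image_mono h.1, image_mono h.2⟩)

lemma sumMap_image_union {α β γ δ : Type*} (f : α → γ) (g : β → δ) (A : Set α) (B : Set β) :
    Sum.map f g '' (Sum.inl '' A ∪ Sum.inr '' B) = Sum.inl '' (f '' A) ∪ Sum.inr '' (g '' B) := by
  simp only [image_union, image_image, Sum.map_inl, Sum.map_inr]

def NetIso.compCongr (i : NetIso M M') (j : NetIso N N') : NetIso (comp M N) (comp M' N') where
  ep := Equiv.sumCongr i.ep j.ep
  et := compTransEquiv (Sync.mapIso i j)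
  pre_eq t := by
    change _ ∪ _ = Sum.map i.ep j.ep '' (_ ∪ _)
    rw [sumMap_image_union]
    exact congrArg₂ _ (congrArg _ (i.setPre_image _)) (congrArg _ (j.setPre_image _))
  post_eq t := by
    change _ ∪ _ = Sum.map i.ep j.ep '' (_ ∪ _)
    rw [sumMap_image_union]
    exact congrArg₂ _ (congrArg _ (i.setPost_image _)) (congrArg _ (j.setPost_image _))
  src_eq t := i.setSrc_image t.1.U
  tgt_eq t := j.setTgt_image t.1.V
  con_iff t u := or_congr (i.setCon_image _ _) (j.setCon_image _ _)

end CompIso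

lemma Iso.comp {a b c : ℕ} {M M' : NetB a b} {N N' : NetB b c} (hM : Iso M M') (hN : Iso N N') :
    Iso (comp M N) (comp M' N') :=
  hM.elim fun i => hN.map i.compCongr

def NetIso.tensorCongr {a b c d : ℕ} {M M' : NetB a b} {N N' : NetB c d}
    (i : NetIso M M') (j : NetIso N N') : NetIso (tensor M N) (tensor M' N') where
  ep := Equiv.sumCongr i.ep j.ep
  et := Equiv.sumCongr i.et j.et
  pre_eq t := by
    rcases t with t | t
    · change Sum.inl '' M'.pre (i.et t) = Sum.map i.ep j.ep '' (Sum.inl '' M.pre t)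
      rw [i.pre_eq, image_image, image_image]; rfl
    · change Sum.inr '' N'.pre (j.et t) = Sum.map i.ep j.ep '' (Sum.inr '' N.pre t)
      rw [j.pre_eq, image_image, image_image]; rfl
  post_eq t := by
    rcases t with t | t
    · change Sum.inl '' M'.post (i.et t) = Sum.map i.ep j.ep '' (Sum.inl '' M.post t)
      rw [i.post_eq, image_image, image_image]; rfl
    · change Sum.inr '' N'.post (j.et t) = Sum.map i.ep j.ep '' (Sum.inr '' N.post t)
      rw [j.post_eq, image_image, image_image]; rfl
  src_eq t := by
    rcases t with t | t
    exacts [congrArg (Fin.castAdd c '' ·) (i.src_eq t), congrArg (Fin.natAdd a '' ·) (j.src_eq t)]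
  tgt_eq t := by
    rcases t with t | t
    exacts [congrArg (Fin.castAdd d '' ·) (i.tgt_eq t), congrArg (Fin.natAdd b '' ·) (j.tgt_eq t)]
  con_iff t u := by
    rcases t with t | t <;> rcases u with u | u
    exacts [i.con_iff t u, Iff.rfl, Iff.rfl, j.con_iff t u]

lemma Iso.tensor {a b c d : ℕ} {M M' : NetB a b} {N N' : NetB c d} (hM : Iso M M')
    (hN : Iso N N') : Iso (tensor M N) (tensor M' N') :=
  hM.elim fun i => hN.map i.tensorCongr

/-! ### Associativity -/

lemma sumAssoc_image {α β γ : Type*} (A : Set α) (B : Set β) (C : Set γ) :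
    Equiv.sumAssoc α β γ '' (Sum.inl '' (Sum.inl '' A ∪ Sum.inr '' B) ∪ Sum.inr '' C) =
      Sum.inl '' A ∪ Sum.inr '' (Sum.inl '' B ∪ Sum.inr '' C) := by
  simp only [image_union, image_image, Equiv.sumAssoc_apply_inl_inl,
    Equiv.sumAssoc_apply_inl_inr, Equiv.sumAssoc_apply_inr, union_assoc]

abbrev TripleSync {a b c d : ℕ} (M : NetB a b) (N : NetB b c) (O : NetB c d) :=
  {p : Sync M N × Sync N O // p.1.V = p.2.U}

section TripleSync

variable {a b c d : ℕ} {M : NetB a b} {N : NetB b c} {O : NetB c d}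

instance : OrderBot (TripleSync M N O) := Subtype.orderBot rfl

variable (hM : IsContention M) (hN : IsContention N) (hO : IsContention O)

def TripleSync.equivCompLeft : Sync (comp M N) O ≃o TripleSync M N O :=
  Equiv.toOrderIso
    { toFun := fun s => ⟨(Sync.join s.U s.miU,
        ⟨joinV s.U, s.V, (Sync.join s.U s.miU).miV, s.miV, (setTgt_comp s.U).symm.trans s.bd⟩),
        rfl⟩
      invFun := fun p => ⟨p.1.1.atoms, p.1.2.V, Sync.mi_atoms hM hN _, p.1.2.miV, by
        rw [setTgt_comp, Sync.joinV_atoms hM hN, p.2, p.1.2.bd]⟩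
      left_inv := fun s => Sync.ext (Sync.atoms_join hM hN s.miU) rfl
      right_inv := fun p => Subtype.ext <| Prod.ext (Sync.join_atoms hM hN p.1.1)
        (Sync.ext ((Sync.joinV_atoms hM hN _).trans p.2) rfl) }
    (fun s s' h => ⟨Sync.join_mono (hS := s.miU) (hS' := s'.miU) h.1,
      biUnion_subset_biUnion_left h.1, h.2⟩)
    (fun _ _ h => ⟨Sync.atoms_mono h.1, h.2.2⟩)

def TripleSync.equivCompRight : Sync M (comp N O) ≃o TripleSync M N O :=
  Equiv.toOrderIso
    { toFun := fun s => ⟨(⟨s.U, joinU s.V, s.miU, (Sync.join s.V s.miV).miU,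
        s.bd.trans (setSrc_comp s.V)⟩, Sync.join s.V s.miV), rfl⟩
      invFun := fun p => ⟨p.1.1.U, p.1.2.atoms, p.1.1.miU, Sync.mi_atoms hN hO _, by
        rw [setSrc_comp, Sync.joinU_atoms hN hO, ← p.2, p.1.1.bd]⟩
      left_inv := fun s => Sync.ext rfl (Sync.atoms_join hN hO s.miV)
      right_inv := fun p => Subtype.ext <| Prod.ext
        (Sync.ext rfl ((Sync.joinU_atoms hN hO _).trans p.2.symm)) (Sync.join_atoms hN hO p.1.2) }
    (fun s s' h => ⟨⟨h.1, biUnion_subset_biUnion_left h.2⟩,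
      Sync.join_mono (hS := s.miV) (hS' := s'.miV) h.2⟩)
    (fun _ _ h => ⟨h.1.1, Sync.atoms_mono h.2⟩)

def compAssocIso : NetIso (comp (comp M N) O) (comp M (comp N O)) where
  ep := Equiv.sumAssoc M.P N.P O.P
  et := compTransEquiv
    ((TripleSync.equivCompLeft hM hN).trans (TripleSync.equivCompRight hN hO).symm)
  pre_eq t := by
    change Sum.inl '' setPre M (joinU t.1.U) ∪ Sum.inr '' setPre (comp N O) (Sync.atoms _) =
      _ '' (Sum.inl '' setPre (comp M N) t.1.U ∪ _)
    rw [setPre_comp, setPre_comp, Sync.joinU_atoms hN hO, Sync.joinV_atoms hN hO]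
    exact (sumAssoc_image _ _ _).symm
  post_eq t := by
    change Sum.inl '' setPost M (joinU t.1.U) ∪ Sum.inr '' setPost (comp N O) (Sync.atoms _) =
      _ '' (Sum.inl '' setPost (comp M N) t.1.U ∪ _)
    rw [setPost_comp, setPost_comp, Sync.joinU_atoms hN hO, Sync.joinV_atoms hN hO]
    exact (sumAssoc_image _ _ _).symm
  src_eq t := (setSrc_comp t.1.U).symm
  tgt_eq t := by
    change setTgt (comp N O) (Sync.atoms _) = _
    rw [setTgt_comp, Sync.joinV_atoms hN hO]
    rfl
  con_iff t u := by
    change setCon M _ _ ∨ setCon (comp N O) (Sync.atoms _) (Sync.atoms _) ↔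
      setCon (comp M N) _ _ ∨ _
    rw [setCon_comp, setCon_comp, Sync.joinU_atoms hN hO, Sync.joinU_atoms hN hO,
      Sync.joinV_atoms hN hO, Sync.joinV_atoms hN hO, or_assoc]
    rfl

end TripleSync

def tensorAssocIso {a b c d e f : ℕ} (M : NetB a b) (N : NetB c d) (O : NetB e f) :
    NetIso (castNet (add_assoc a c e) (add_assoc b d f) (tensor (tensor M N) O))
      (tensor M (tensor N O)) where
  ep := Equiv.sumAssoc M.P N.P O.P
  et := Equiv.sumAssoc M.T N.T O.T
  pre_eq t := by
    rcases t with (t | t) | t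
    · change Sum.inl '' M.pre t =
        Equiv.sumAssoc M.P N.P O.P '' (Sum.inl '' (Sum.inl '' M.pre t))
      rw [image_image, image_image]; rfl
    · change Sum.inr '' (Sum.inl '' N.pre t) =
        Equiv.sumAssoc M.P N.P O.P '' (Sum.inl '' (Sum.inr '' N.pre t))
      rw [image_image, image_image, image_image]; rfl
    · change Sum.inr '' (Sum.inr '' O.pre t) =
        Equiv.sumAssoc M.P N.P O.P '' (Sum.inr '' O.pre t)
      rw [image_image, image_image]; rfl
  post_eq t := by
    rcases t with (t | t) | t
    · change Sum.inl '' M.post t =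
        Equiv.sumAssoc M.P N.P O.P '' (Sum.inl '' (Sum.inl '' M.post t))
      rw [image_image, image_image]; rfl
    · change Sum.inr '' (Sum.inl '' N.post t) =
        Equiv.sumAssoc M.P N.P O.P '' (Sum.inl '' (Sum.inr '' N.post t))
      rw [image_image, image_image, image_image]; rfl
    · change Sum.inr '' (Sum.inr '' O.post t) =
        Equiv.sumAssoc M.P N.P O.P '' (Sum.inr '' O.post t)
      rw [image_image, image_image]; rfl
  src_eq t := by
    rcases t with (t | t) | t
    · change Fin.castAdd (c + e) '' M.src t =
        Fin.cast _ '' (Fin.castAdd e '' (Fin.castAdd c '' M.src t))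
      simp only [image_image]; exact image_congr fun x _ => Fin.ext (by simp)
    · change Fin.natAdd a '' (Fin.castAdd e '' N.src t) =
        Fin.cast _ '' (Fin.castAdd e '' (Fin.natAdd a '' N.src t))
      simp only [image_image]; exact image_congr fun x _ => Fin.ext (by simp)
    · change Fin.natAdd a '' (Fin.natAdd c '' O.src t) =
        Fin.cast _ '' (Fin.natAdd (a + c) '' O.src t)
      simp only [image_image]; exact image_congr fun x _ => Fin.ext (by simp [add_assoc])
  tgt_eq t := by
    rcases t with (t | t) | t
    · change Fin.castAdd (d + f) '' M.tgt t =
        Fin.cast _ '' (Fin.castAdd f '' (Fin.castAdd d '' M.tgt t))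
      simp only [image_image]; exact image_congr fun x _ => Fin.ext (by simp)
    · change Fin.natAdd b '' (Fin.castAdd f '' N.tgt t) =
        Fin.cast _ '' (Fin.castAdd f '' (Fin.natAdd b '' N.tgt t))
      simp only [image_image]; exact image_congr fun x _ => Fin.ext (by simp)
    · change Fin.natAdd b '' (Fin.natAdd d '' O.tgt t) =
        Fin.cast _ '' (Fin.natAdd (b + d) '' O.tgt t)
      simp only [image_image]; exact image_congr fun x _ => Fin.ext (by simp [add_assoc])
  con_iff t u := by rcases t with (t | t) | t <;> rcases u with (u | u) | u <;> exact Iff.rfl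

/-! ### Contention of composite nets -/

lemma setCon_of_biUnion_inter_nonempty {k l : ℕ} {M : NetB k l} {X : Type*} {f : M.T → Set X}
    (hf : ∀ u v, (f u ∩ f v).Nonempty → M.con u v) {U U' : Set M.T}
    (h : ((⋃ u ∈ U, f u) ∩ ⋃ u ∈ U', f u).Nonempty) : setCon M U U' := by
  obtain ⟨x, hx, hx'⟩ := h
  obtain ⟨u, hu, hxu⟩ := mem_iUnion₂.mp hx
  obtain ⟨u', hu', hxu'⟩ := mem_iUnion₂.mp hx'
  exact ⟨u, hu, u', hu', hf u u' ⟨x, hxu, hxu'⟩⟩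

lemma inter_nonempty_of_sum_image {α β : Type*} {A A' : Set α} {B B' : Set β}
    (h : ((Sum.inl '' A ∪ Sum.inr '' B) ∩ (Sum.inl '' A' ∪ Sum.inr '' B')).Nonempty) :
    (A ∩ A').Nonempty ∨ (B ∩ B').Nonempty := by
  obtain ⟨x | x, hx, hx'⟩ := h <;> simp only [mem_union, mem_image, Sum.inl.injEq,
    Sum.inr.injEq, reduceCtorEq, and_false, exists_false, or_false, false_or,
    exists_eq_right] at hx hx'
  exacts [.inl ⟨x, hx, hx'⟩, .inr ⟨x, hx, hx'⟩]

lemma isContention_comp {a b c : ℕ} {M : NetB a b} {N : NetB b c}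
    (hM : IsContention M) (hN : IsContention N) : IsContention (comp M N) := by
  refine ⟨fun t => ?_, fun t u h => ?_, fun t u h => ?_⟩
  · obtain ⟨x | x, hx⟩ := Sync.exists_mem_of_ne_bot (Sync.isAtom_val t).1
    exacts [.inl ⟨x, hx, x, hx, hM.1 x⟩, .inr ⟨x, hx, x, hx, hN.1 x⟩]
  · rcases h with ⟨x, hx, y, hy, h⟩ | ⟨x, hx, y, hy, h⟩
    exacts [.inl ⟨y, hy, x, hx, hM.2.1 _ _ h⟩, .inr ⟨y, hy, x, hx, hN.2.1 _ _ h⟩]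
  · rcases h with h | h | h | h
    · exact (inter_nonempty_of_sum_image h).imp (setCon_of_biUnion_inter_nonempty hM.con_of_pre)
        (setCon_of_biUnion_inter_nonempty hN.con_of_pre)
    · exact (inter_nonempty_of_sum_image h).imp (setCon_of_biUnion_inter_nonempty hM.con_of_post)
        (setCon_of_biUnion_inter_nonempty hN.con_of_post)
    · exact .inl (setCon_of_biUnion_inter_nonempty hM.con_of_src h)
    · exact .inr (setCon_of_biUnion_inter_nonempty hN.con_of_tgt h)

lemma image_inter_nonempty_iff {α β : Type*} {f : α → β} (hf : Function.Injective f)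
    {A B : Set α} : (f '' A ∩ f '' B).Nonempty ↔ (A ∩ B).Nonempty := by
  rw [← image_inter hf, image_nonempty]

lemma castAdd_ne_natAdd {m n : ℕ} (i : Fin m) (j : Fin n) :
    Fin.castAdd n i ≠ Fin.natAdd m j := by
  simp only [ne_eq, Fin.ext_iff, Fin.val_castAdd, Fin.val_natAdd]
  omega

lemma isContention_tensor {a b c d : ℕ} {M : NetB a b} {N : NetB c d}
    (hM : IsContention M) (hN : IsContention N) : IsContention (tensor M N) := by
  refine ⟨?_, ?_, ?_⟩
  · rintro (t | t)
    exacts [hM.1 t, hN.1 t]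
  · rintro (t | t) (u | u) h
    exacts [hM.2.1 _ _ h, h.elim, h.elim, hN.2.1 _ _ h]
  · rintro (t | t) (u | u) h
    · refine hM.2.2 t u ?_
      rcases h with h | h | h | h
      exacts [.inl ((image_inter_nonempty_iff Sum.inl_injective).mp h),
        .inr (.inl ((image_inter_nonempty_iff Sum.inl_injective).mp h)),
        .inr (.inr (.inl ((image_inter_nonempty_iff (Fin.castAdd_injective _ _)).mp h))),
        .inr (.inr (.inr ((image_inter_nonempty_iff (Fin.castAdd_injective _ _)).mp h)))]
    · exfalso
      rcases h with ⟨_, ⟨p, -, rfl⟩, q, -, h⟩ | ⟨_, ⟨p, -, rfl⟩, q, -, h⟩ |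
        ⟨_, ⟨p, -, rfl⟩, q, -, h⟩ | ⟨_, ⟨p, -, rfl⟩, q, -, h⟩
      exacts [Sum.inr_ne_inl h, Sum.inr_ne_inl h, castAdd_ne_natAdd p q h.symm,
        castAdd_ne_natAdd p q h.symm]
    · exfalso
      rcases h with ⟨_, ⟨p, -, rfl⟩, q, -, h⟩ | ⟨_, ⟨p, -, rfl⟩, q, -, h⟩ |
        ⟨_, ⟨p, -, rfl⟩, q, -, h⟩ | ⟨_, ⟨p, -, rfl⟩, q, -, h⟩
      exacts [Sum.inl_ne_inr h, Sum.inl_ne_inr h, castAdd_ne_natAdd q p h,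
        castAdd_ne_natAdd q p h]
    · refine hN.2.2 t u ?_
      rcases h with h | h | h | h
      exacts [.inl ((image_inter_nonempty_iff Sum.inr_injective).mp h),
        .inr (.inl ((image_inter_nonempty_iff Sum.inr_injective).mp h)),
        .inr (.inr (.inl ((image_inter_nonempty_iff (Fin.natAdd_injective _ _)).mp h))),
        .inr (.inr (.inr ((image_inter_nonempty_iff (Fin.natAdd_injective _ _)).mp h)))]

lemma isContention_castNet {k l k' l' : ℕ} (hk : k = k') (hl : l = l') {M : NetB k l}
    (hM : IsContention M) : IsContention (castNet hk hl M) := by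
  subst hk hl
  rwa [castNet_rfl]

lemma isContention_emptyNet : IsContention emptyNet :=
  ⟨fun t => t.elim, fun t => t.elim, fun t => t.elim⟩

/-! ### Reassociating wiring expressions -/

def IsoS (X Y : NetS) : Prop :=
  ∃ (h1 : X.1 = Y.1) (h2 : X.2.1 = Y.2.1), Iso (castNet h1 h2 X.2.2) Y.2.2

lemma isoS_mk_iff {k l : ℕ} {M N : NetB k l} : IsoS ⟨k, l, M⟩ ⟨k, l, N⟩ ↔ Iso M N :=
  ⟨fun ⟨_, _, h⟩ => castNet_rfl M ▸ h, fun h => ⟨rfl, rfl, (castNet_rfl M).symm ▸ h⟩⟩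

namespace IsoS

@[elab_as_elim]
lemma induction {motive : (X Y : NetS) → IsoS X Y → Prop}
    (mk : ∀ (k l : ℕ) (M N : NetB k l) (h : Iso M N),
      motive ⟨k, l, M⟩ ⟨k, l, N⟩ (isoS_mk_iff.mpr h))
    {X Y : NetS} (h : IsoS X Y) : motive X Y h := by
  obtain ⟨k, l, M⟩ := X
  obtain ⟨k', l', N⟩ := Y
  obtain ⟨hk, hl, h'⟩ := h
  simp only at hk hl
  subst hk hl
  exact mk k l M N (isoS_mk_iff.mp ⟨rfl, rfl, h'⟩)

lemma fst_eq {X Y : NetS} (h : IsoS X Y) : X.1 = Y.1 := let ⟨h1, _⟩ := h; h1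

lemma snd_eq {X Y : NetS} (h : IsoS X Y) : X.2.1 = Y.2.1 := let ⟨_, h2, _⟩ := h; h2

lemma refl (X : NetS) : IsoS X X := isoS_mk_iff.mpr (Iso.refl X.2.2)

lemma symm {X Y : NetS} (h : IsoS X Y) : IsoS Y X :=
  h.induction fun _ _ _ _ h => isoS_mk_iff.mpr h.symm

lemma trans {X Y Z : NetS} (h : IsoS X Y) (h' : IsoS Y Z) : IsoS X Z := by
  induction h using IsoS.induction with | mk k l M N h => ?_
  obtain ⟨k', l', O⟩ := Z
  obtain ⟨hk, hl, h'⟩ := h'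
  simp only at hk hl
  subst hk hl
  exact isoS_mk_iff.mpr (h.trans (isoS_mk_iff.mp ⟨rfl, rfl, h'⟩))

end IsoS

lemma seqS_of_eq {X Y : NetS} (h : X.2.1 = Y.1) :
    seqS X Y = ⟨X.1, Y.2.1, comp (castNet rfl h X.2.2) Y.2.2⟩ :=
  dif_pos h

lemma seqS_of_ne {X Y : NetS} (h : X.2.1 ≠ Y.1) : seqS X Y = ⟨0, 0, emptyNet⟩ :=
  dif_neg h

lemma seqS_mk {k l n : ℕ} (M : NetB k l) (N : NetB l n) :
    seqS ⟨k, l, M⟩ ⟨l, n, N⟩ = ⟨k, n, comp M N⟩ :=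
  (seqS_of_eq (X := ⟨k, l, M⟩) (Y := ⟨l, n, N⟩) rfl).trans (by rw [castNet_rfl])

lemma seqS_fst {X Y : NetS} (h : X.2.1 = Y.1) : (seqS X Y).1 = X.1 := by
  rw [seqS_of_eq h]

lemma seqS_snd {X Y : NetS} (h : X.2.1 = Y.1) : (seqS X Y).2.1 = Y.2.1 := by
  rw [seqS_of_eq h]

lemma IsoS.seqS_congr {X X' Y Y' : NetS} (hXY : X.2.1 = Y.1) (hX : IsoS X X') (hY : IsoS Y Y') :
    IsoS (seqS X Y) (seqS X' Y') := by
  induction hX using IsoS.induction with | mk k l M M' hM => ?_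
  induction hY using IsoS.induction with | mk l' n N N' hN => ?_
  obtain rfl : l = l' := hXY
  rw [seqS_mk M N, seqS_mk M' N', isoS_mk_iff]
  exact hM.comp hN

lemma IsoS.tenS_congr {X X' Y Y' : NetS} (hX : IsoS X X') (hY : IsoS Y Y') :
    IsoS (tenS X Y) (tenS X' Y') := by
  induction hX using IsoS.induction with | mk k l M M' hM => ?_
  induction hY using IsoS.induction with | mk k' l' N N' hN => ?_
  exact isoS_mk_iff.mpr (hM.tensor hN)

lemma IsoS.seqS_assoc {X Y Z : NetS} (hXY : X.2.1 = Y.1) (hYZ : Y.2.1 = Z.1)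
    (hX : IsContention X.2.2) (hY : IsContention Y.2.2) (hZ : IsContention Z.2.2) :
    IsoS (seqS (seqS X Y) Z) (seqS X (seqS Y Z)) := by
  obtain ⟨k, l, M⟩ := X
  obtain ⟨_, m, N⟩ := Y
  obtain ⟨_, n, O⟩ := Z
  obtain rfl : l = _ := hXY
  obtain rfl : m = _ := hYZ
  rw [seqS_mk M N, seqS_mk N O, seqS_mk (comp M N) O, seqS_mk M (comp N O), isoS_mk_iff]
  exact ⟨compAssocIso hX hY hZ⟩

lemma IsoS.tenS_assoc (X Y Z : NetS) : IsoS (tenS (tenS X Y) Z) (tenS X (tenS Y Z)) :=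
  ⟨add_assoc _ _ _, add_assoc _ _ _, ⟨tensorAssocIso X.2.2 Y.2.2 Z.2.2⟩⟩

section Expr

variable {Var : Type} (A : Var → NetS)

lemma isContention_sem (hA : ∀ x, IsContention (A x).2.2) (t : WExpr Var) :
    IsContention (sem A t).2.2 := by
  induction t with
  | leaf x => exact hA x
  | seq t₁ t₂ ih₁ ih₂ =>
    change IsContention (seqS (sem A t₁) (sem A t₂)).2.2
    by_cases h : (sem A t₁).2.1 = (sem A t₂).1
    · rw [seqS_of_eq h]
      exact isContention_comp (isContention_castNet rfl h ih₁) ih₂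
    · rw [seqS_of_ne h]
      exact isContention_emptyNet
  | ten t₁ t₂ ih₁ ih₂ => exact isContention_tensor ih₁ ih₂

variable {A}

lemma HasWidth.boundary_le {w : ℕ} {t : WExpr Var} (h : HasWidth A w t) :
    (sem A t).1 ≤ w ∧ (sem A t).2.1 ≤ w := by
  cases t
  exacts [⟨h.1, h.2.2⟩, h.2.2, h.2.2]

lemma hasWidth_seq_iff {w : ℕ} {a b : WExpr Var} (h : (sem A a).2.1 = (sem A b).1) :
    HasWidth A w (.seq a b) ↔ HasWidth A w a ∧ HasWidth A w b :=
  ⟨fun h => ⟨h.1, h.2.1⟩, fun ⟨ha, hb⟩ => ⟨ha, hb, (seqS_fst h).trans_le ha.boundary_le.1,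
    (seqS_snd h).trans_le hb.boundary_le.2⟩⟩

lemma hasWidth_ten_iff {w : ℕ} {a b : WExpr Var} :
    HasWidth A w (.ten a b) ↔ HasWidth A w a ∧ HasWidth A w b ∧
      (sem A a).1 + (sem A b).1 ≤ w ∧ (sem A a).2.1 + (sem A b).2.1 ≤ w :=
  Iff.rfl

variable (A)

def Interchangeable (t t' : WExpr Var) : Prop :=
  (WT A t ↔ WT A t') ∧
    (WT A t → IsoS (sem A t) (sem A t') ∧ ∀ w, HasWidth A w t ↔ HasWidth A w t')

lemma equivalence_interchangeable : Equivalence (Interchangeable A) where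
  refl _ := ⟨Iff.rfl, fun _ => ⟨IsoS.refl _, fun _ => Iff.rfl⟩⟩
  symm h := ⟨h.1.symm, fun ht => ⟨(h.2 (h.1.mpr ht)).1.symm,
    fun w => ((h.2 (h.1.mpr ht)).2 w).symm⟩⟩
  trans h h' := ⟨h.1.trans h'.1, fun ht => ⟨(h.2 ht).1.trans (h'.2 (h.1.mp ht)).1,
    fun w => ((h.2 ht).2 w).trans ((h'.2 (h.1.mp ht)).2 w)⟩⟩

variable {A}

lemma Interchangeable.seq {a a' b b' : WExpr Var} (ha : Interchangeable A a a')
    (hb : Interchangeable A b b') : Interchangeable A (.seq a b) (.seq a' b') := by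
  have match_iff (wa : WT A a) (wb : WT A b) :
      (sem A a).2.1 = (sem A b).1 ↔ (sem A a').2.1 = (sem A b').1 := by
    rw [(ha.2 wa).1.snd_eq, (hb.2 wb).1.fst_eq]
  have wt : WT A (.seq a b) ↔ WT A (.seq a' b') :=
    ⟨fun ⟨wa, wb, m⟩ => ⟨ha.1.mp wa, hb.1.mp wb, (match_iff wa wb).mp m⟩,
      fun ⟨wa, wb, m⟩ => ⟨ha.1.mpr wa, hb.1.mpr wb, (match_iff (ha.1.mpr wa) (hb.1.mpr wb)).mpr m⟩⟩
  refine ⟨wt, fun ⟨wa, wb, m⟩ => ⟨(ha.2 wa).1.seqS_congr m (hb.2 wb).1, fun w => ?_⟩⟩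
  rw [hasWidth_seq_iff m, hasWidth_seq_iff ((match_iff wa wb).mp m), (ha.2 wa).2, (hb.2 wb).2]

lemma Interchangeable.ten {a a' b b' : WExpr Var} (ha : Interchangeable A a a')
    (hb : Interchangeable A b b') : Interchangeable A (.ten a b) (.ten a' b') := by
  refine ⟨and_congr ha.1 hb.1, fun ⟨wa, wb⟩ => ?_⟩
  obtain ⟨isoA, widthA⟩ := ha.2 wa
  obtain ⟨isoB, widthB⟩ := hb.2 wb
  refine ⟨isoA.tenS_congr isoB, fun w => ?_⟩
  have := isoA.fst_eq; have := isoA.snd_eq; have := isoB.fst_eq; have := isoB.snd_eq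
  rw [hasWidth_ten_iff, hasWidth_ten_iff, widthA, widthB]
  exact and_congr_right fun _ => and_congr_right fun _ => by omega

lemma interchangeable_seq_assoc (hA : ∀ x, IsContention (A x).2.2) (a b c : WExpr Var) :
    Interchangeable A (.seq (.seq a b) c) (.seq a (.seq b c)) := by
  have wt : WT A (.seq (.seq a b) c) ↔ WT A (.seq a (.seq b c)) := by
    constructor
    · rintro ⟨⟨wa, wb, m₁⟩, wc, m₂⟩
      have m₂' : (sem A b).2.1 = (sem A c).1 := (seqS_snd m₁).symm.trans m₂
      exact ⟨wa, ⟨wb, wc, m₂'⟩, m₁.trans (seqS_fst m₂').symm⟩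
    · rintro ⟨wa, ⟨wb, wc, m₂⟩, m₁⟩
      have m₁' : (sem A a).2.1 = (sem A b).1 := m₁.trans (seqS_fst m₂)
      exact ⟨⟨wa, wb, m₁'⟩, wc, (seqS_snd m₁').trans m₂⟩
  refine ⟨wt, fun h => ?_⟩
  obtain ⟨-, ⟨-, -, m₂'⟩, m₁'⟩ := wt.mp h
  obtain ⟨⟨-, -, m₁⟩, -, m₂⟩ := h
  refine ⟨IsoS.seqS_assoc m₁ m₂' (isContention_sem A hA a) (isContention_sem A hA b)
    (isContention_sem A hA c), fun w => ?_⟩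
  rw [hasWidth_seq_iff m₂, hasWidth_seq_iff m₁, hasWidth_seq_iff m₁', hasWidth_seq_iff m₂',
    and_assoc]

lemma interchangeable_ten_assoc (a b c : WExpr Var) :
    Interchangeable A (.ten (.ten a b) c) (.ten a (.ten b c)) := by
  refine ⟨by simp only [WT, and_assoc], fun _ => ⟨IsoS.tenS_assoc _ _ _, fun w => ?_⟩⟩
  simp only [hasWidth_ten_iff, sem, tenS]
  constructor
  · rintro ⟨⟨ha, hb, -, -⟩, hc, hl, hr⟩
    exact ⟨ha, ⟨hb, hc, by omega, by omega⟩, by omega, by omega⟩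
  · rintro ⟨ha, ⟨hb, hc, -, -⟩, hl, hr⟩
    exact ⟨⟨ha, hb, by omega, by omega⟩, hc, by omega, by omega⟩

lemma AssocStep.interchangeable (hA : ∀ x, IsContention (A x).2.2) {t t' : WExpr Var}
    (h : AssocStep t t') : Interchangeable A t t' := by
  have refl := (equivalence_interchangeable A).refl
  induction h with
  | seqAssoc a b c => exact interchangeable_seq_assoc hA a b c
  | tenAssoc a b c => exact interchangeable_ten_assoc a b c
  | seqCongrL b _ ih => exact ih.seq (refl b)
  | seqCongrR a _ ih => exact (refl a).seq ih
  | tenCongrL b _ ih => exact ih.ten (refl b)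
  | tenCongrR a _ ih => exact (refl a).ten ih

lemma AssocEquiv.interchangeable (hA : ∀ x, IsContention (A x).2.2) {t t' : WExpr Var}
    (h : AssocEquiv t t') : Interchangeable A t t' :=
  (equivalence_interchangeable A).eqvGen_iff.mp
    (Relation.EqvGen.mono (fun _ _ => AssocStep.interchangeable hA) t t' h)

end Expr

/-- Invariance of width w.r.t. associativity.
If `(t, A)` is a wiring decomposition of a net with boundaries `N : l → r`
of width `w`, and `t'` is equivalent to `t` up to associativity of `;` and
`⊗`, then `(t', A)` is also a wiring decomposition of `N` of width `w`
(in particular `⟦t'⟧_A` has left boundary `l` and right boundary `r`). -/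
theorem width_invariance_assoc {Var : Type} (A : Var → NetS) (t t' : WExpr Var)
    {l r : ℕ} (N : NetB l r) (w : ℕ)
    (hdec : IsDecompOf A t N) (hwidth : HasWidth A w t)
    (hassoc : AssocEquiv t t') :
    IsDecompOf A t' N ∧ HasWidth A w t' := by
  obtain ⟨hA, hwt, hiso⟩ := hdec
  have hiso : IsoS (sem A t) ⟨l, r, N⟩ := hiso
  obtain ⟨hwt_iff, hsem⟩ := hassoc.interchangeable hA
  obtain ⟨hiso', hwidth_iff⟩ := hsem hwt
  exact ⟨⟨hA, hwt_iff.mp hwt, hiso'.symm.trans hiso⟩, (hwidth_iff w).mp hwidth⟩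

end NWB
end

section
/- Decomposition basis: let N : k → l be a net with boundaries with a pure decomposition N ≅ N_l ; N_r, where N_l : k → n and N_r : n → l both have nonempty place sets, and let (P_l, P_r) be the induced oriented partition of the places of N. Then the vector (bconn^{N_r}(i))_{i<n} of connections of the shared boundary ports computed in N_r is a basis of the network net(P_l → P_r), and the vector (bconn^{N_l}(i))_{i<n} computed in N_l is a basis of net(P_r → P_l). -/
namespace NWB

variable {k n l : ℕ}

/-- Transport of a portset of `N_r` to a portset of `N` along the witnessing
isomorphism: place ports go via the isomorphism (and the right injection),
right boundary ports of `N_r` are right boundary ports of `N`.  (In a pure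
decomposition no other ports occur in the relevant portsets.) -/
def liftSetR (Nl : NetB k n) (Nr : NetB n l) (N : NetB k l)
    (iso : NetIso (comp Nl Nr) N) (K : Set (Port Nr)) : Set (Port N) :=
  { q | (∃ p : Nr.P, portIn p ∈ K ∧ q = portIn (iso.ep (Sum.inr p))) ∨
        (∃ p : Nr.P, portOut p ∈ K ∧ q = portOut (iso.ep (Sum.inr p))) ∨
        (∃ j : Fin l, bRight j ∈ K ∧ q = bRight j) }

/-- Transport of a portset of `N_l` to a portset of `N`, symmetrically. -/
def liftSetL (Nl : NetB k n) (Nr : NetB n l) (N : NetB k l)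
    (iso : NetIso (comp Nl Nr) N) (K : Set (Port Nl)) : Set (Port N) :=
  { q | (∃ p : Nl.P, portIn p ∈ K ∧ q = portIn (iso.ep (Sum.inl p))) ∨
        (∃ p : Nl.P, portOut p ∈ K ∧ q = portOut (iso.ep (Sum.inl p))) ∨
        (∃ i : Fin k, bLeft i ∈ K ∧ q = bLeft i) }

/-- `bconn^{N_r}(i)`, the connection of the shared boundary port `i` computed
in `N_r`, viewed as a connection of `N`. -/
def bconnR (Nl : NetB k n) (Nr : NetB n l) (N : NetB k l)
    (iso : NetIso (comp Nl Nr) N) (i : Fin n) : Set (Set (Port N)) :=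
  liftSetR Nl Nr N iso '' conn Nr (bLeft i)

/-- `bconn^{N_l}(i)`, the connection of the shared boundary port `i` computed
in `N_l`, viewed as a connection of `N`. -/
def bconnL (Nl : NetB k n) (Nr : NetB n l) (N : NetB k l)
    (iso : NetIso (comp Nl Nr) N) (i : Fin n) : Set (Set (Port N)) :=
  liftSetL Nl Nr N iso '' conn Nl (bRight i)

/-- The left part of the oriented partition of the places of `N` induced by
the witnessing isomorphism. -/
def partL (Nl : NetB k n) (Nr : NetB n l) (N : NetB k l)
    (iso : NetIso (comp Nl Nr) N) : Set N.P :=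
  Set.range (fun p : Nl.P => iso.ep (Sum.inl p))

/-- The right part of the induced oriented partition. -/
def partR (Nl : NetB k n) (Nr : NetB n l) (N : NetB k l)
    (iso : NetIso (comp Nl Nr) N) : Set N.P :=
  Set.range (fun p : Nr.P => iso.ep (Sum.inr p))

end NWB

/-!
Purity forces every transition of `N_l` that touches a shared port `j` to have target exactly
`{j}`, and dually for `N_r`. Hence a minimal synchronisation using both components is a pair
`({u}, {v})` glued along a single shared port, and the portset of the corresponding transition
of `N` is the lifted portset of `u` (on the `P_l` side) together with that of `v` (on the `P_r`
side). So the connection of a port `q` on the `P_l` side, restricted to the `P_r` side, consists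
of the lifted portsets of those `v` that synchronise with some `u` touching `q`: it is the union
of `bconn^{N_r}(j)` over the shared ports `j` of such `u`. The other half is symmetric.
-/

namespace NWB

section Ports

variable {k l : ℕ} {N : NetB k l}

@[simp] lemma portIn_mem_tports {p : N.P} {t : N.T} : portIn p ∈ tports N t ↔ p ∈ N.post t := by
  simp only [tports, Set.mem_union, Set.mem_image]
  simp [portIn, portOut, bLeft, bRight, Port]

@[simp] lemma portOut_mem_tports {p : N.P} {t : N.T} : portOut p ∈ tports N t ↔ p ∈ N.pre t := by
  simp only [tports, Set.mem_union, Set.mem_image]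
  simp [portIn, portOut, bLeft, bRight, Port]

@[simp] lemma bLeft_mem_tports {i : Fin k} {t : N.T} : bLeft i ∈ tports N t ↔ i ∈ N.src t := by
  simp only [tports, Set.mem_union, Set.mem_image]
  simp [portIn, portOut, bLeft, bRight, Port]

@[simp] lemma bRight_mem_tports {j : Fin l} {t : N.T} : bRight j ∈ tports N t ↔ j ∈ N.tgt t := by
  simp only [tports, Set.mem_union, Set.mem_image]
  simp [portIn, portOut, bLeft, bRight, Port]

@[simp] lemma bLeft_inj {i i' : Fin k} : (bLeft i : Port N) = bLeft i' ↔ i = i' := by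
  simp [bLeft, Port]

@[simp] lemma bRight_inj {j j' : Fin l} : (bRight j : Port N) = bRight j' ↔ j = j' := by
  simp [bRight, Port]

@[simp] lemma portIn_ne_bLeft (p : N.P) (i : Fin k) : (portIn p : Port N) ≠ bLeft i := by
  simp [portIn, bLeft, Port]

@[simp] lemma portIn_ne_bRight (p : N.P) (j : Fin l) : (portIn p : Port N) ≠ bRight j := by
  simp [portIn, bRight, Port]

@[simp] lemma portOut_ne_bLeft (p : N.P) (i : Fin k) : (portOut p : Port N) ≠ bLeft i := by
  simp [portOut, bLeft, Port]

@[simp] lemma portOut_ne_bRight (p : N.P) (j : Fin l) : (portOut p : Port N) ≠ bRight j := by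
  simp [portOut, bRight, Port]

@[simp] lemma bLeft_ne_bRight (i : Fin k) (j : Fin l) : (bLeft i : Port N) ≠ bRight j := by
  simp [bLeft, bRight, Port]

@[simp] lemma bRight_ne_bLeft (j : Fin l) (i : Fin k) : (bRight j : Port N) ≠ bLeft i :=
  (bLeft_ne_bRight i j).symm

lemma MI_singleton (u : N.T) : MI N {u} :=
  fun _ ha _ hb _ => ha.trans hb.symm

lemma connR_eq_of_tports_eq_union {ι : Type*} {f : ι → N.T} (hf : Function.Surjective f)
    {L R : Set (Port N)} (hLR : Disjoint L R) {A B : ι → Set (Port N)} (hA : ∀ i, A i ⊆ L)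
    (hB : ∀ i, B i ⊆ R) (hsplit : ∀ i, tports N (f i) = A i ∪ B i) {q : Port N} (hq : q ∈ L) :
    connR N R q = {K | ∃ i, q ∈ A i ∧ (B i).Nonempty ∧ K = B i} := by
  have hqR : q ∉ R := hLR.notMem_of_mem_left hq
  have hcut : ∀ i, (tports N (f i) \ {q}) ∩ R = B i := fun i => by
    ext x
    rw [hsplit]
    constructor
    · rintro ⟨⟨hxA | hxB, -⟩, hxR⟩
      · exact absurd hxR (hLR.notMem_of_mem_left (hA i hxA))
      · exact hxB
    · intro hx
      exact ⟨⟨Or.inr hx, fun h => hqR (h ▸ hB i hx)⟩, hB i hx⟩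
  ext K
  simp only [connR, conn, Set.mem_ofPred_eq]
  constructor
  · rintro ⟨_, ⟨t, hsub, rfl⟩, hne, rfl⟩
    obtain ⟨i, rfl⟩ := hf t
    rw [hcut] at hne ⊢
    have hqt : q ∈ tports N (f i) := hsub.1 rfl
    rw [hsplit] at hqt
    exact ⟨i, hqt.resolve_right fun h => hqR (hB i h), hne, rfl⟩
  · rintro ⟨i, hqA, ⟨x, hx⟩, rfl⟩
    have hxq : x ≠ q := fun h => hqR (h ▸ hB i hx)
    have hqt : q ∈ tports N (f i) := by rw [hsplit]; exact Or.inl hqA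
    refine ⟨_, ⟨f i, ?_, rfl⟩, by rw [hcut]; exact ⟨x, hx⟩, (hcut i).symm⟩
    rw [Set.ssubset_iff_of_subset (Set.singleton_subset_iff.mpr hqt)]
    exact ⟨x, by rw [hsplit]; exact Or.inr hx, hxq⟩

end Ports

section Decomposition

variable {k n l : ℕ} {Nl : NetB k n} {Nr : NetB n l}

lemma Pure.tgt_eq_singleton (hpure : Pure Nl Nr) {u : Nl.T} {j : Fin n} (hj : j ∈ Nl.tgt u) :
    Nl.tgt u = {j} := by
  refine Set.eq_singleton_iff_unique_mem.mpr ⟨hj, fun i hi => by_contra fun hij => ?_⟩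
  have hi' : (bRight i : Port Nl) ∈ tports Nl u \ {bRight j} :=
    ⟨bRight_mem_tports.mpr hi, by simpa using hij⟩
  refine hpure.1 j _ ⟨u, ?_, rfl⟩ i hi'
  exact (Set.ssubset_iff_of_subset (by simpa using hj)).mpr ⟨_, hi'.1, hi'.2⟩

lemma Pure.src_eq_singleton (hpure : Pure Nl Nr) {v : Nr.T} {j : Fin n} (hj : j ∈ Nr.src v) :
    Nr.src v = {j} := by
  refine Set.eq_singleton_iff_unique_mem.mpr ⟨hj, fun i hi => by_contra fun hij => ?_⟩
  have hi' : (bLeft i : Port Nr) ∈ tports Nr v \ {bLeft j} :=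
    ⟨bLeft_mem_tports.mpr hi, by simpa using hij⟩
  refine hpure.2 j _ ⟨v, ?_, rfl⟩ i hi'
  exact (Set.ssubset_iff_of_subset (by simpa using hj)).mpr ⟨_, hi'.1, hi'.2⟩

def pairSync {u : Nl.T} {v : Nr.T} {j : Fin n} (htgt : Nl.tgt u = {j}) (hsrc : Nr.src v = {j}) :
    Sync Nl Nr :=
  ⟨{u}, {v}, MI_singleton u, MI_singleton v, by simp [setTgt, setSrc, htgt, hsrc]⟩

lemma pairSync_minimal {u : Nl.T} {v : Nr.T} {j : Fin n} (htgt : Nl.tgt u = {j})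
    (hsrc : Nr.src v = {j}) : (pairSync htgt hsrc).Minimal := by
  refine ⟨fun h => Set.singleton_ne_empty u h.1, fun s' hU hV => ?_⟩
  have hbd := s'.bd
  rcases Set.subset_singleton_iff_eq.mp hU with hU' | hU' <;>
    rcases Set.subset_singleton_iff_eq.mp hV with hV' | hV' <;>
    simp only [hU', hV', setTgt, setSrc, Set.mem_empty_iff_false, Set.iUnion_of_empty,
      Set.iUnion_empty, Set.mem_singleton_iff, Set.iUnion_iUnion_eq_left, htgt, hsrc] at hbd
  · exact Or.inl ⟨hU', hV'⟩
  · exact absurd hbd.symm (Set.singleton_ne_empty j)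
  · exact absurd hbd (Set.singleton_ne_empty j)
  · exact Or.inr ⟨hU', hV'⟩

lemma Sync.Minimal.exists_pair (hpure : Pure Nl Nr) {s : Sync Nl Nr} (hmin : s.Minimal)
    (hU : s.U.Nonempty) (hV : s.V.Nonempty) :
    ∃ u v j, Nl.tgt u = {j} ∧ Nr.src v = {j} ∧ s.U = {u} ∧ s.V = {v} := by
  obtain ⟨u, hu⟩ := hU
  obtain ⟨j, hju⟩ : (Nl.tgt u).Nonempty := by
    by_contra! h
    rcases hmin.2 ⟨{u}, ∅, MI_singleton u, fun _ h => h.elim, by simp [setTgt, setSrc, h]⟩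
      (Set.singleton_subset_iff.mpr hu) (Set.empty_subset _) with htr | heq
    · exact Set.singleton_ne_empty u htr.1
    · exact hV.ne_empty heq.2.symm
  have htgt := hpure.tgt_eq_singleton hju
  obtain ⟨v, hv, hjv⟩ :=
    Set.mem_iUnion₂.mp (s.bd ▸ Set.mem_biUnion hu hju : j ∈ setSrc Nr s.V)
  have hsrc := hpure.src_eq_singleton hjv
  rcases hmin.2 (pairSync htgt hsrc) (Set.singleton_subset_iff.mpr hu)
    (Set.singleton_subset_iff.mpr hv) with htr | heq
  · exact absurd htr.1 (Set.singleton_ne_empty u)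
  · exact ⟨u, v, j, htgt, hsrc, heq.1.symm, heq.2.symm⟩

end Decomposition

section Lift

variable {k n l : ℕ} (Nl : NetB k n) (Nr : NetB n l) (N : NetB k l)
  (iso : NetIso (comp Nl Nr) N)

lemma liftSetL_subset_eportsL (K : Set (Port Nl)) :
    liftSetL Nl Nr N iso K ⊆ eportsL N (partL Nl Nr N iso) := by
  rintro x (⟨p, -, rfl⟩ | ⟨p, -, rfl⟩ | ⟨i, -, rfl⟩)
  · exact Or.inl (Or.inl ⟨_, ⟨p, rfl⟩, rfl⟩)
  · exact Or.inl (Or.inr ⟨_, ⟨p, rfl⟩, rfl⟩)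
  · exact Or.inr ⟨i, rfl⟩

lemma liftSetR_subset_eportsR (K : Set (Port Nr)) :
    liftSetR Nl Nr N iso K ⊆ eportsR N (partR Nl Nr N iso) := by
  rintro x (⟨p, -, rfl⟩ | ⟨p, -, rfl⟩ | ⟨j, -, rfl⟩)
  · exact Or.inl (Or.inl ⟨_, ⟨p, rfl⟩, rfl⟩)
  · exact Or.inl (Or.inr ⟨_, ⟨p, rfl⟩, rfl⟩)
  · exact Or.inr ⟨j, rfl⟩

lemma disjoint_eportsL_eportsR :
    Disjoint (eportsL N (partL Nl Nr N iso)) (eportsR N (partR Nl Nr N iso)) := by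
  rw [Set.disjoint_left]
  rintro x ((⟨_, ⟨p, rfl⟩, rfl⟩ | ⟨_, ⟨p, rfl⟩, rfl⟩) | ⟨i, rfl⟩)
    ((⟨_, ⟨p', h⟩, h'⟩ | ⟨_, ⟨p', h⟩, h'⟩) | ⟨j, h⟩) <;>
    simp_all only [portIn, portOut, bLeft, bRight, Port, Sum.inl.injEq, Sum.inr.injEq,
      reduceCtorEq]
  all_goals exact Sum.inr_ne_inl (iso.ep.injective h)

lemma liftSetL_tports (u : Nl.T) :
    liftSetL Nl Nr N iso (tports Nl u) =
      (fun p => portIn (iso.ep (Sum.inl p))) '' Nl.post u ∪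
        (fun p => portOut (iso.ep (Sum.inl p))) '' Nl.pre u ∪ bLeft '' Nl.src u := by
  ext x
  simp only [liftSetL, Set.mem_ofPred_eq, portIn_mem_tports, portOut_mem_tports, bLeft_mem_tports,
    Set.mem_union, Set.mem_image, eq_comm (a := x), or_assoc]

lemma liftSetR_tports (v : Nr.T) :
    liftSetR Nl Nr N iso (tports Nr v) =
      (fun p => portIn (iso.ep (Sum.inr p))) '' Nr.post v ∪
        (fun p => portOut (iso.ep (Sum.inr p))) '' Nr.pre v ∪ bRight '' Nr.tgt v := by
  ext x
  simp only [liftSetR, Set.mem_ofPred_eq, portIn_mem_tports, portOut_mem_tports, bRight_mem_tports,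
    Set.mem_union, Set.mem_image, eq_comm (a := x), or_assoc]

lemma tports_iso_et (t : (comp Nl Nr).T) :
    tports N (iso.et t) = (⋃ u ∈ t.1.U, liftSetL Nl Nr N iso (tports Nl u)) ∪
      ⋃ v ∈ t.1.V, liftSetR Nl Nr N iso (tports Nr v) := by
  simp only [liftSetL_tports, liftSetR_tports]
  rw [tports, iso.pre_eq, iso.post_eq, iso.src_eq, iso.tgt_eq]
  simp only [comp, setPre, setPost, setSrc, setTgt, Set.image_union, Set.image_iUnion₂,
    Set.image_image, Set.iUnion_union_distrib]
  ac_rfl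

lemma liftSetL_diff_bRight (K : Set (Port Nl)) (j : Fin n) :
    liftSetL Nl Nr N iso (K \ {bRight j}) = liftSetL Nl Nr N iso K := by
  ext x
  simp [liftSetL]

lemma liftSetR_diff_bLeft (K : Set (Port Nr)) (j : Fin n) :
    liftSetR Nl Nr N iso (K \ {bLeft j}) = liftSetR Nl Nr N iso K := by
  ext x
  simp [liftSetR]

lemma singleton_bRight_ssubset_tports_iff {u : Nl.T} {j : Fin n} (htgt : Nl.tgt u = {j}) :
    {bRight j} ⊂ tports Nl u ↔ (liftSetL Nl Nr N iso (tports Nl u)).Nonempty := by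
  rw [Set.ssubset_iff_of_subset (by simp [htgt]), liftSetL_tports]
  constructor
  · rintro ⟨x, ((⟨p, hp, rfl⟩ | ⟨p, hp, rfl⟩) | ⟨i, hi, rfl⟩) | ⟨j', hj', rfl⟩, hxj⟩
    · exact ⟨_, Or.inl (Or.inr ⟨p, hp, rfl⟩)⟩
    · exact ⟨_, Or.inl (Or.inl ⟨p, hp, rfl⟩)⟩
    · exact ⟨_, Or.inr ⟨i, hi, rfl⟩⟩
    · exact absurd (by simpa [htgt] using hj') hxj
  · rintro ⟨x, (⟨p, hp, rfl⟩ | ⟨p, hp, rfl⟩) | ⟨i, hi, rfl⟩⟩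
    · exact ⟨portIn p, by simpa using hp, by simp⟩
    · exact ⟨portOut p, by simpa using hp, by simp⟩
    · exact ⟨bLeft i, by simpa using hi, by simp⟩

lemma singleton_bLeft_ssubset_tports_iff {v : Nr.T} {j : Fin n} (hsrc : Nr.src v = {j}) :
    {bLeft j} ⊂ tports Nr v ↔ (liftSetR Nl Nr N iso (tports Nr v)).Nonempty := by
  rw [Set.ssubset_iff_of_subset (by simp [hsrc]), liftSetR_tports]
  constructor
  · rintro ⟨x, ((⟨p, hp, rfl⟩ | ⟨p, hp, rfl⟩) | ⟨i, hi, rfl⟩) | ⟨j', hj', rfl⟩, hxj⟩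
    · exact ⟨_, Or.inl (Or.inr ⟨p, hp, rfl⟩)⟩
    · exact ⟨_, Or.inl (Or.inl ⟨p, hp, rfl⟩)⟩
    · exact absurd (by simpa [hsrc] using hi) hxj
    · exact ⟨_, Or.inr ⟨j', hj', rfl⟩⟩
  · rintro ⟨x, (⟨p, hp, rfl⟩ | ⟨p, hp, rfl⟩) | ⟨j', hj', rfl⟩⟩
    · exact ⟨portIn p, by simpa using hp, by simp⟩
    · exact ⟨portOut p, by simpa using hp, by simp⟩
    · exact ⟨bRight j', by simpa using hj', by simp⟩

lemma bconnL_eq (hpure : Pure Nl Nr) (j : Fin n) :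
    bconnL Nl Nr N iso j = {K | ∃ u, Nl.tgt u = {j} ∧
      (liftSetL Nl Nr N iso (tports Nl u)).Nonempty ∧ K = liftSetL Nl Nr N iso (tports Nl u)} := by
  ext K
  constructor
  · rintro ⟨_, ⟨u, hsub, rfl⟩, rfl⟩
    have htgt := hpure.tgt_eq_singleton (bRight_mem_tports.mp (hsub.1 rfl))
    exact ⟨u, htgt, (singleton_bRight_ssubset_tports_iff Nl Nr N iso htgt).mp hsub,
      liftSetL_diff_bRight Nl Nr N iso _ j⟩
  · rintro ⟨u, htgt, hne, rfl⟩
    exact ⟨_, ⟨u, (singleton_bRight_ssubset_tports_iff Nl Nr N iso htgt).mpr hne, rfl⟩,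
      liftSetL_diff_bRight Nl Nr N iso _ j⟩

lemma bconnR_eq (hpure : Pure Nl Nr) (j : Fin n) :
    bconnR Nl Nr N iso j = {K | ∃ v, Nr.src v = {j} ∧
      (liftSetR Nl Nr N iso (tports Nr v)).Nonempty ∧ K = liftSetR Nl Nr N iso (tports Nr v)} := by
  ext K
  constructor
  · rintro ⟨_, ⟨v, hsub, rfl⟩, rfl⟩
    have hsrc := hpure.src_eq_singleton (bLeft_mem_tports.mp (hsub.1 rfl))
    exact ⟨v, hsrc, (singleton_bLeft_ssubset_tports_iff Nl Nr N iso hsrc).mp hsub,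
      liftSetR_diff_bLeft Nl Nr N iso _ j⟩
  · rintro ⟨v, hsrc, hne, rfl⟩
    exact ⟨_, ⟨v, (singleton_bLeft_ssubset_tports_iff Nl Nr N iso hsrc).mpr hne, rfl⟩,
      liftSetR_diff_bLeft Nl Nr N iso _ j⟩

lemma connR_eportsR_eq_biUnion (hpure : Pure Nl Nr) {q : Port N}
    (hq : q ∈ eportsL N (partL Nl Nr N iso)) :
    connR N (eportsR N (partR Nl Nr N iso)) q =
      ⋃ j ∈ {j | ∃ u, Nl.tgt u = {j} ∧ q ∈ liftSetL Nl Nr N iso (tports Nl u)},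
        bconnR Nl Nr N iso j := by
  rw [connR_eq_of_tports_eq_union iso.et.surjective (disjoint_eportsL_eportsR Nl Nr N iso)
    (fun _ => Set.iUnion₂_subset fun _ _ => liftSetL_subset_eportsL Nl Nr N iso _)
    (fun _ => Set.iUnion₂_subset fun _ _ => liftSetR_subset_eportsR Nl Nr N iso _)
    (tports_iso_et Nl Nr N iso) hq]
  ext K
  simp only [Set.mem_iUnion, bconnR_eq Nl Nr N iso hpure, Set.mem_ofPred_eq, exists_prop]
  constructor
  · rintro ⟨⟨s, hm⟩, hqA, hBne, rfl⟩
    obtain ⟨u, v, j, htgt, hsrc, hU, hV⟩ := hm.exists_pair hpure (hqA.imp fun _ h => h.1)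
      ((Set.nonempty_biUnion.mp hBne).imp fun _ h => h.1)
    simp only [hU, hV, Set.mem_singleton_iff, exists_eq_left, Set.iUnion_iUnion_eq_left]
      at hqA hBne ⊢
    exact ⟨j, ⟨u, htgt, hqA⟩, v, hsrc, hBne, rfl⟩
  · rintro ⟨j, ⟨u, htgt, hqu⟩, v, hsrc, hne, rfl⟩
    exact ⟨⟨pairSync htgt hsrc, pairSync_minimal htgt hsrc⟩, by simpa [pairSync] using hqu,
      by simpa [pairSync] using hne, by simp [pairSync]⟩

lemma connR_eportsL_eq_biUnion (hpure : Pure Nl Nr) {q : Port N}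
    (hq : q ∈ eportsR N (partR Nl Nr N iso)) :
    connR N (eportsL N (partL Nl Nr N iso)) q =
      ⋃ j ∈ {j | ∃ v, Nr.src v = {j} ∧ q ∈ liftSetR Nl Nr N iso (tports Nr v)},
        bconnL Nl Nr N iso j := by
  rw [connR_eq_of_tports_eq_union iso.et.surjective (disjoint_eportsL_eportsR Nl Nr N iso).symm
    (fun _ => Set.iUnion₂_subset fun _ _ => liftSetR_subset_eportsR Nl Nr N iso _)
    (fun _ => Set.iUnion₂_subset fun _ _ => liftSetL_subset_eportsL Nl Nr N iso _)
    (fun t => (tports_iso_et Nl Nr N iso t).trans (Set.union_comm _ _)) hq]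
  ext K
  simp only [Set.mem_iUnion, bconnL_eq Nl Nr N iso hpure, Set.mem_ofPred_eq, exists_prop]
  constructor
  · rintro ⟨⟨s, hm⟩, hqB, hAne, rfl⟩
    obtain ⟨u, v, j, htgt, hsrc, hU, hV⟩ := hm.exists_pair hpure
      ((Set.nonempty_biUnion.mp hAne).imp fun _ h => h.1) (hqB.imp fun _ h => h.1)
    simp only [hU, hV, Set.mem_singleton_iff, exists_eq_left, Set.iUnion_iUnion_eq_left]
      at hqB hAne ⊢
    exact ⟨j, ⟨v, hsrc, hqB⟩, u, htgt, hAne, rfl⟩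
  · rintro ⟨j, ⟨v, hsrc, hqv⟩, u, htgt, hne, rfl⟩
    exact ⟨⟨pairSync htgt hsrc, pairSync_minimal htgt hsrc⟩, by simpa [pairSync] using hqv,
      by simpa [pairSync] using hne, by simp [pairSync]⟩

end Lift

lemma isBasis_of_forall_eq_biUnion {C : Type} {m : ℕ} {b : Fin m → Set C} {M : Set (Set C)}
    (h : ∀ c ∈ M, ∃ S : Set (Fin m), c = ⋃ i ∈ S, b i) : IsBasis b M := by
  classical
  intro c hc
  obtain ⟨S, rfl⟩ := h c hc
  exact ⟨S.toFinset, by simp⟩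

theorem decomposition_basis_general {k n l : ℕ} (Nl : NetB k n) (Nr : NetB n l) (N : NetB k l)
    (iso : NetIso (comp Nl Nr) N) (hpure : Pure Nl Nr) :
    IsBasis (bconnR Nl Nr N iso)
      (networkLR N (partL Nl Nr N iso) (partR Nl Nr N iso)) ∧
    IsBasis (bconnL Nl Nr N iso)
      (networkRL N (partL Nl Nr N iso) (partR Nl Nr N iso)) := by
  constructor
  · refine isBasis_of_forall_eq_biUnion ?_
    rintro _ ⟨q, hq, rfl⟩
    exact ⟨_, connR_eportsR_eq_biUnion Nl Nr N iso hpure hq⟩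
  · refine isBasis_of_forall_eq_biUnion ?_
    rintro _ ⟨q, hq, rfl⟩
    exact ⟨_, connR_eportsL_eq_biUnion Nl Nr N iso hpure hq⟩

/-- Decomposition basis.  Let `N : k → l` be a net with
boundaries with a pure decomposition `N ≅ N_l ; N_r`, where `N_l : k → n`
and `N_r : n → l` both have nonempty place sets, and let `(P_l, P_r)` be the
induced oriented partition of the places of `N`.  Then
`(bconn^{N_r}(i))_{i<n}` is a basis of `net(P_l → P_r)` and
`(bconn^{N_l}(i))_{i<n}` is a basis of `net(P_r → P_l)`. -/
theorem decomposition_basis {k n l : ℕ} (Nl : NetB k n) (Nr : NetB n l) (N : NetB k l)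
    (hNl : IsContention Nl) (hNr : IsContention Nr) (hN : IsContention N)
    (hPl : Nonempty Nl.P) (hPr : Nonempty Nr.P)
    (iso : NetIso (comp Nl Nr) N) (hpure : Pure Nl Nr) :
    IsBasis (bconnR Nl Nr N iso)
      (networkLR N (partL Nl Nr N iso) (partR Nl Nr N iso)) ∧
    IsBasis (bconnL Nl Nr N iso)
      (networkRL N (partL Nl Nr N iso) (partR Nl Nr N iso)) :=
  decomposition_basis_general Nl Nr N iso hpure

end NWB
end
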